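/- arXiv:1811.01537 — 10 statements merged into one kernel-verified Lean document; each statement's English description precedes it below -/
import Mathlib

section
/- For any two permutations σ, τ of [n], the Kendall tau distance K(σ,τ) (number of pairs ordered oppositely) and the Spearman footrule distance F(σ,τ) = Σ_i |σ(i) - τ(i)| satisfy K(σ,τ) ≤ F(σ,τ) ≤ 2·K(σ,τ). -/
/-!
Upper bound: counting the `j` ranked below `i` by `σ`, split according to `τ`, and vice versa,
gives `σ i + #{j | σ i < σ j, τ j < τ i} = τ i + #{j | τ i < τ j, σ j < σ i}`. Hence `|σ i - τ i|`
is at most the number of discordant pairs containing `i`, and summing over `i` gives `F ≤ 2K`.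

Lower bound, by induction on `F`: if `σ ≠ τ`, put `π = τ σ⁻¹`, let `b` be least with `π b < b` and
`a` the last point below `b` moved by `π`. Every point strictly between `a` and `b` is fixed, so
`π b ≤ a < b ≤ π a`. Exchanging the values `a` and `b` in `σ` then lowers `F` by exactly `2 (b - a)`,
while by the triangle inequality it lowers `K` by at most `K(1, swap a b) ≤ 2 (b - a)`.
-/

open Finset

/-- Kendall tau distance: number of unordered pairs ranked oppositely
(each discordant unordered pair counted once). -/
def kendall {n : ℕ} (σ τ : Equiv.Perm (Fin n)) : ℕ :=
  (Finset.univ.filter (fun q : Fin n × Fin n => σ q.1 < σ q.2 ∧ τ q.2 < τ q.1)).card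

/-- Spearman footrule distance. -/
def footrule {n : ℕ} (σ τ : Equiv.Perm (Fin n)) : ℤ :=
  ∑ i, |((σ i : ℕ) : ℤ) - ((τ i : ℕ) : ℤ)|

section

open Equiv Equiv.Perm

variable {n : ℕ}

def discordantAfter (σ τ : Perm (Fin n)) (i : Fin n) : Finset (Fin n) :=
  {j | σ i < σ j ∧ τ j < τ i}

theorem sum_card_discordantAfter (σ τ : Perm (Fin n)) :
    ∑ i, #(discordantAfter σ τ i) = kendall σ τ := by
  simp only [kendall, discordantAfter, card_filter, Fintype.sum_prod_type]

theorem kendall_comm (σ τ : Perm (Fin n)) : kendall σ τ = kendall τ σ :=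
  card_equiv (Equiv.prodComm _ _) (by simp [and_comm])

theorem card_filter_apply_lt (σ : Perm (Fin n)) (i : Fin n) : #{j | σ j < σ i} = σ i := by
  rw [← Fin.card_Iio (σ i), ← card_map σ.toEmbedding]
  congr 1
  ext x
  simp

theorem val_add_card_discordantAfter (σ τ : Perm (Fin n)) (i : Fin n) :
    (σ i : ℕ) + #(discordantAfter σ τ i) = τ i + #(discordantAfter τ σ i) := by
  rw [← card_filter_apply_lt σ i, ← card_filter_apply_lt τ i]
  simp only [discordantAfter, card_filter, ← sum_add_distrib]
  refine sum_congr rfl fun j _ => ?_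
  have hinj : σ j = σ i ↔ τ j = τ i := by simp
  rcases lt_trichotomy (σ j) (σ i) with hσ | hσ | hσ <;>
    rcases lt_trichotomy (τ j) (τ i) with hτ | hτ | hτ <;> simp_all [not_lt_of_gt]

theorem footrule_le_two_mul_kendall (σ τ : Perm (Fin n)) :
    footrule σ τ ≤ 2 * (kendall σ τ : ℤ) := by
  have hterm (i : Fin n) : |((σ i : ℕ) : ℤ) - ((τ i : ℕ) : ℤ)| ≤
      #(discordantAfter τ σ i) + #(discordantAfter σ τ i) := by
    have := val_add_card_discordantAfter σ τ i
    exact abs_le.mpr ⟨by omega, by omega⟩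
  calc footrule σ τ ≤ ∑ i, ((#(discordantAfter τ σ i) : ℤ) + #(discordantAfter σ τ i)) :=
        sum_le_sum fun i _ => hterm i
    _ = 2 * (kendall σ τ : ℤ) := by
      rw [sum_add_distrib]
      simp only [← Nat.cast_sum, sum_card_discordantAfter, kendall_comm τ σ]
      ring

theorem kendall_self (σ : Perm (Fin n)) : kendall σ σ = 0 :=
  card_eq_zero.mpr <| filter_false_of_mem fun _ _ h => lt_asymm h.1 h.2

theorem footrule_nonneg (σ τ : Perm (Fin n)) : 0 ≤ footrule σ τ :=
  sum_nonneg fun _ _ => abs_nonneg _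

theorem kendall_le_kendall_add_kendall (σ τ ρ : Perm (Fin n)) :
    kendall σ ρ ≤ kendall σ τ + kendall τ ρ := by
  refine (card_le_card fun q hq => ?_).trans (card_union_le _ _)
  simp only [mem_filter, mem_univ, true_and, mem_union] at hq ⊢
  have hne : τ q.1 ≠ τ q.2 := fun h => hq.1.ne (congrArg σ (τ.injective h))
  rcases hne.lt_or_gt with h | h
  · exact .inr ⟨h, hq.2⟩
  · exact .inl ⟨hq.1, h⟩

theorem kendall_mul_right (σ τ ρ : Perm (Fin n)) : kendall (σ * ρ) (τ * ρ) = kendall σ τ :=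
  card_equiv (ρ.prodCongr ρ) fun _ => by
    rw [mem_filter, mem_filter]
    simp

theorem kendall_one_swap_le {a b : Fin n} (hab : a ≤ b) :
    kendall 1 (swap a b) ≤ 2 * (b - a : ℕ) := by
  refine (card_le_card (t := ({a} ×ˢ Ioc a b) ∪ (Ico a b ×ˢ {b})) fun q hq => ?_).trans
    ((card_union_le _ _).trans ?_)
  · obtain ⟨x, y⟩ := q
    rw [mem_filter] at hq
    simp only [mem_univ, true_and, one_apply, swap_apply_def, mem_union, mem_product,
      mem_singleton, mem_Ioc, mem_Ico] at hq ⊢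
    split_ifs at hq <;> omega
  · simp only [singleton_product, product_singleton, card_map, Fin.card_Ioc, Fin.card_Ico]
    omega

theorem exists_apply_lt_of_ne_one {π : Perm (Fin n)} (hπ : π ≠ 1) : ∃ x, π x < x := by
  by_contra! h
  have hsum : ∑ x, ((x : Fin n) : ℕ) = ∑ x, (π x : ℕ) := (Equiv.sum_comp π fun x => (x : ℕ)).symm
  rw [sum_eq_sum_iff_of_le fun x _ => Fin.le_def.mp (h x)] at hsum
  exact hπ (Perm.ext fun x => (Fin.ext (hsum x (mem_univ x))).symm)

theorem exists_lt_le_apply_apply_le {π : Perm (Fin n)} (hπ : π ≠ 1) :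
    ∃ a b, a < b ∧ b ≤ π a ∧ π b ≤ a := by
  obtain ⟨b, hb, hbmin⟩ := exists_min_image {x | π x < x} id
    (filter_nonempty_iff.mpr (by simpa using exists_apply_lt_of_ne_one hπ))
  simp only [mem_filter, mem_univ, true_and, id] at hb hbmin
  obtain ⟨a, ha, hamax⟩ := exists_max_image {x | x < b ∧ π x ≠ x} id
    ⟨π b, by simpa using ⟨hb, hb.ne⟩⟩
  simp only [mem_filter, mem_univ, true_and, id] at ha hamax
  have hfix : ∀ x, a < x → x < b → π x = x := fun x hax hxb =>
    not_not.mp fun h => (hamax x ⟨hxb, h⟩).not_gt hax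
  have happly : ∀ x, a < π x → π x < b → π x = x := fun x h₁ h₂ =>
    π.injective (hfix _ h₁ h₂)
  have ha_lt : a < π a := (not_lt.mp fun h => (hbmin a h).not_gt ha.1).lt_of_ne' ha.2
  refine ⟨a, b, ha.1, not_lt.mp fun h => ?_, not_lt.mp fun h => ?_⟩
  · exact ha.2 (happly a ha_lt h)
  · exact hb.ne (happly b h hb)

theorem footrule_eq_footrule_swap_mul_add {σ τ : Perm (Fin n)} {a b : Fin n} (hab : a < b)
    (ha : b ≤ τ (σ⁻¹ a)) (hb : τ (σ⁻¹ b) ≤ a) :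
    footrule σ τ = footrule (swap a b * σ) τ + 2 * (((b : ℕ) : ℤ) - (a : ℕ)) := by
  have hdiff : footrule σ τ - footrule (swap a b * σ) τ =
      ∑ x : Fin n,
        (|((x : ℕ) : ℤ) - (τ (σ⁻¹ x) : ℕ)| - |((swap a b x : ℕ) : ℤ) - (τ (σ⁻¹ x) : ℕ)|) := by
    rw [footrule, footrule, ← sum_sub_distrib]
    refine Eq.trans ?_ (Equiv.sum_comp σ _)
    simp [mul_apply]
  rw [Fintype.sum_eq_add a b hab.ne fun x hx => by simp [swap_apply_of_ne_of_ne hx.1 hx.2]] at hdiff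
  simp only [swap_apply_left, swap_apply_right] at hdiff
  rw [abs_of_nonpos, abs_of_nonpos, abs_of_nonneg, abs_of_nonneg] at hdiff <;> omega

theorem kendall_le_footrule (σ τ : Perm (Fin n)) : (kendall σ τ : ℤ) ≤ footrule σ τ := by
  induction hN : (footrule σ τ).toNat using Nat.strong_induction_on generalizing σ with
  | _ N ih =>
    by_cases hστ : σ = τ
    · subst hστ
      simpa [kendall_self] using footrule_nonneg σ σ
    obtain ⟨a, b, hab, ha, hb⟩ :=
      exists_lt_le_apply_apply_le (π := τ * σ⁻¹) (mul_inv_eq_one.not.mpr (Ne.symm hστ))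
    have hF := footrule_eq_footrule_swap_mul_add hab ha hb
    have hswap : kendall σ (swap a b * σ) ≤ 2 * (b - a : ℕ) := by
      simpa using (kendall_mul_right 1 (swap a b) σ).trans_le (kendall_one_swap_le hab.le)
    have htri := kendall_le_kendall_add_kendall σ (swap a b * σ) τ
    have hrest := ih _ (by have := footrule_nonneg (swap a b * σ) τ; omega) (swap a b * σ) rfl
    omega

end

/-- Diaconis–Graham: K(σ,τ) ≤ F(σ,τ) ≤ 2·K(σ,τ). -/
theorem kendall_le_footrule_le_two_kendall {n : ℕ} (σ τ : Equiv.Perm (Fin n)) :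
    (kendall σ τ : ℤ) ≤ footrule σ τ ∧ footrule σ τ ≤ 2 * (kendall σ τ : ℤ) :=
  ⟨kendall_le_footrule σ τ, footrule_le_two_mul_kendall σ τ⟩
end

section
/- Let π be a top-list on [n] (an injective partial ranking assigning ranks 1..k to k distinct candidates and ∞ to the rest), let σ be a permutation of [n], and let τ be the linear extension of π that breaks ties (among candidates with π(i)=∞) according to σ. Then the generalized Kendall tau distance K(σ,π) = |{(i,j) : σ(i) > σ(j) and π(i) < π(j)}| equals the usual Kendall tau distance K(σ,τ). -/
open Finset

/-- A top-`k`-list on `[n]`: ranks `1..k` are each assigned to exactly one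
candidate, and every ranked candidate has a rank in `1..k`
(unranked candidates have rank `⊤ = ∞`). -/
def IsTopList (n k : ℕ) (π : Fin n → ℕ∞) : Prop :=
  (∀ i, π i ≠ ⊤ → 1 ≤ π i ∧ π i ≤ (k : ℕ∞)) ∧
  (∀ r : ℕ, 1 ≤ r → r ≤ k → ∃! i, π i = (r : ℕ∞))

/-- The 1-indexed rank of candidate `i` in the permutation `σ`. -/
def rank1 {n : ℕ} (σ : Equiv.Perm (Fin n)) (i : Fin n) : ℕ := (σ i : ℕ) + 1

/-- `τ` is the linear extension of the top-list `π` breaking ties (among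
unranked candidates) according to `σ`. -/
def IsLinExt {n : ℕ} (π : Fin n → ℕ∞) (σ τ : Equiv.Perm (Fin n)) : Prop :=
  (∀ i, π i ≠ ⊤ → ((rank1 τ i : ℕ) : ℕ∞) = π i) ∧
  (∀ i j, π i ≠ ⊤ → π j = ⊤ → τ i < τ j) ∧
  (∀ i j, π i = ⊤ → π j = ⊤ → (σ i < σ j ↔ τ i < τ j))

/-- Generalized Kendall tau distance between a permutation and a top-list. -/
def kendallGen {n : ℕ} (σ : Equiv.Perm (Fin n)) (π : Fin n → ℕ∞) : ℕ :=
  (Finset.univ.filter (fun q : Fin n × Fin n => σ q.2 < σ q.1 ∧ π q.1 < π q.2)).card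

/- Swapping the two entries of a pair turns the pairs counted by `kendallGen σ π` into those
counted by `kendall σ τ`, provided `π` and `τ` order every pair that `σ` reverses in the same way.
For the linear extension they do: ranked pairs are ordered by their ranks, a ranked candidate
precedes an unranked one in both, and two unranked candidates are tied in `π` while `τ` orders
them as `σ` does, so neither counts the pair. -/

theorem kendallGen_eq_kendall_of_lt_iff {n : ℕ} {π : Fin n → ℕ∞} {σ τ : Equiv.Perm (Fin n)}
    (h : ∀ i j, σ j < σ i → (π i < π j ↔ τ i < τ j)) : kendallGen σ π = kendall σ τ :=
  Finset.card_equiv (Equiv.prodComm _ _) fun q => by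
    simpa using and_congr_right (h q.1 q.2)

namespace IsLinExt

variable {n : ℕ} {π : Fin n → ℕ∞} {σ τ : Equiv.Perm (Fin n)}

theorem lt_iff_of_ne_top (hτ : IsLinExt π σ τ) {i j : Fin n} (hi : π i ≠ ⊤) (hj : π j ≠ ⊤) :
    π i < π j ↔ τ i < τ j := by
  rw [← hτ.1 i hi, ← hτ.1 j hj, Nat.cast_lt, rank1, rank1, Nat.add_lt_add_iff_right,
    Fin.val_fin_lt]

theorem lt_iff_of_lt (hτ : IsLinExt π σ τ) {i j : Fin n} (hσ : σ j < σ i) :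
    π i < π j ↔ τ i < τ j := by
  have hranked := hτ.2.1
  have hunranked := hτ.2.2
  by_cases hi : π i = ⊤ <;> by_cases hj : π j = ⊤
  · rw [hi, hj, ← hunranked i j hi hj]
    exact iff_of_false (lt_irrefl _) hσ.asymm
  · rw [hi]
    exact iff_of_false not_top_lt (hranked j i hj hi).asymm
  · rw [hj, lt_top_iff_ne_top]
    exact iff_of_true hi (hranked i j hi hj)
  · exact hτ.lt_iff_of_ne_top hi hj

end IsLinExt

theorem kendallGen_eq_kendall_linExt_general {n : ℕ} (π : Fin n → ℕ∞)
    (σ τ : Equiv.Perm (Fin n)) (hτ : IsLinExt π σ τ) :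
    kendallGen σ π = kendall σ τ :=
  kendallGen_eq_kendall_of_lt_iff fun _ _ => hτ.lt_iff_of_lt

/-- The generalized Kendall tau distance between `σ` and a top-list `π` equals
the usual Kendall tau distance between `σ` and the linear extension `τ` of `π`
breaking ties according to `σ`. -/
theorem kendallGen_eq_kendall_linExt {n k : ℕ} (π : Fin n → ℕ∞)
    (hπ : IsTopList n k π) (σ τ : Equiv.Perm (Fin n)) (hτ : IsLinExt π σ τ) :
    kendallGen σ π = kendall σ τ :=
  kendallGen_eq_kendall_linExt_general π σ τ hτ
end

section
/- Let p be a probability distribution over top-lists on [n]. For a permutation σ, define K(σ,p) = Σ_π p(π)·K(σ,π) and F(σ,p) = Σ_π p(π)·F(σ,π). If σ minimizes F(·,p) over all permutations and σ* is any permutation, then K(σ,p) ≤ 2·K(σ*,p). (Correctness of the generalized footrule 2-approximation.) -/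
open Finset

/-!
Write `K` for the Kendall tau distance between two permutations (the number of discordant
pairs) and `F` for the Spearman footrule; Diaconis and Graham showed `K ≤ F ≤ 2K`.
For `F ≤ 2K`: both `(τ i - s i)₊` and `(s i - τ i)₊` are bounded by counts of discordant
pairs containing `i`, and every discordant pair is counted once from each of its ends.
For `K ≤ F`: a discordant pair `(i, j)` (`j` before `i` in `s`, `i` before `j` in `τ`) has
either `τ i ≤ s j < s i` or `s j < τ i < τ j`; charging it to `i` in the first case and to
`j` in the second charges at most `(s i - τ i)₊` pairs to `i`, resp. `(τ j - s j)₊` to `j`.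

The generalized Kendall tau `K(s, π)` equals `K(s, τ)` for the linear extension `τ` of `π`
breaking ties by `s`, and `F(s, π)` is by definition `F(s, τ)`. Hence for the minimizer `σ`,
`K(σ, p) ≤ F(σ, p) ≤ F(σ*, p) ≤ 2 K(σ*, p)`.
-/

lemma card_filter_comp_equiv {α β : Type*} [Fintype α] [Fintype β] (e : α ≃ β)
    (p : β → Prop) [DecidablePred p] : #{a | p (e a)} = #{b | p b} :=
  card_equiv e (by simp)

section Permutations

variable {n : ℕ}

def kendallTau (s τ : Equiv.Perm (Fin n)) : ℕ :=
  #{q : Fin n × Fin n | s q.2 < s q.1 ∧ τ q.1 < τ q.2}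

lemma kendallTau_eq_sum_left (s τ : Equiv.Perm (Fin n)) :
    kendallTau s τ = ∑ i, #{j | s j < s i ∧ τ i < τ j} := by
  simp only [kendallTau, card_filter, Fintype.sum_prod_type]

lemma kendallTau_eq_sum_right (s τ : Equiv.Perm (Fin n)) :
    kendallTau s τ = ∑ j, #{i | s j < s i ∧ τ i < τ j} := by
  simp only [kendallTau, card_filter, Fintype.sum_prod_type_right]

lemma footrule_eq_sum_dist (s τ : Equiv.Perm (Fin n)) :
    footrule s τ = ((∑ i, Nat.dist (s i) (τ i) : ℕ) : ℤ) := by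
  rw [footrule, Nat.cast_sum]
  refine sum_congr rfl fun i _ => ?_
  rw [abs_eq_max_neg, Nat.dist]
  omega

/-- Of the `τ i` elements that `τ` ranks below `i`, at most `s i` are ranked below `i` by `s`. -/
lemma sub_le_card_discordant (s τ : Equiv.Perm (Fin n)) (i : Fin n) :
    (τ i : ℕ) - s i ≤ #{j | s i < s j ∧ τ j < τ i} := by
  have hcover : ({j | τ j < τ i} : Finset (Fin n)) ⊆
      ({j | s i < s j ∧ τ j < τ i} : Finset (Fin n)) ∪
        ({j | s j < s i} : Finset (Fin n)) := by
    intro j hj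
    simp only [mem_union, mem_filter, mem_univ, true_and] at hj ⊢
    have hji : s j ≠ s i := fun h => hj.ne (by rw [s.injective h])
    rcases hji.lt_or_gt with h | h
    · exact Or.inr h
    · exact Or.inl ⟨h, hj⟩
  have hcard := (card_le_card hcover).trans (card_union_le _ _)
  rw [card_filter_comp_equiv τ (· < τ i), card_filter_comp_equiv s (· < s i),
    filter_gt_eq_Iio, filter_gt_eq_Iio, Fin.card_Iio, Fin.card_Iio] at hcard
  omega

lemma sum_dist_le_two_mul_kendallTau (s τ : Equiv.Perm (Fin n)) :
    ∑ i, Nat.dist (s i) (τ i) ≤ 2 * kendallTau s τ := by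
  have hdist : ∀ i, Nat.dist (s i) (τ i) ≤
      #{j | s j < s i ∧ τ i < τ j} + #{j | s i < s j ∧ τ j < τ i} := fun i => by
    have h := sub_le_card_discordant τ s i
    simp only [and_comm] at h
    exact Nat.add_le_add h (sub_le_card_discordant s τ i)
  calc ∑ i, Nat.dist (s i) (τ i)
      ≤ ∑ i, (#{j | s j < s i ∧ τ i < τ j} + #{j | s i < s j ∧ τ j < τ i}) :=
        sum_le_sum fun i _ => hdist i
    _ = 2 * kendallTau s τ := by
        rw [sum_add_distrib, ← kendallTau_eq_sum_left, ← kendallTau_eq_sum_right, two_mul]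

lemma kendallTau_le_sum_dist (s τ : Equiv.Perm (Fin n)) :
    kendallTau s τ ≤ ∑ i, Nat.dist (s i) (τ i) := by
  have hsplit := card_filter_add_card_filter_not
    (s := {q : Fin n × Fin n | s q.2 < s q.1 ∧ τ q.1 < τ q.2}) (p := fun q => τ q.1 ≤ s q.2)
  rw [filter_filter, filter_filter] at hsplit
  have hleft : #{q : Fin n × Fin n | (s q.2 < s q.1 ∧ τ q.1 < τ q.2) ∧ τ q.1 ≤ s q.2} ≤
      ∑ i, ((s i : ℕ) - τ i) := by
    calc _ ≤ #{q : Fin n × Fin n | τ q.1 ≤ s q.2 ∧ s q.2 < s q.1} :=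
          card_le_card fun q => by simp only [mem_filter, mem_univ, true_and]; tauto
      _ = ∑ i, #{j | τ i ≤ s j ∧ s j < s i} := by
          simp only [card_filter, Fintype.sum_prod_type]
      _ = ∑ i, ((s i : ℕ) - τ i) := sum_congr rfl fun i _ => by
          rw [card_filter_comp_equiv s (fun a => τ i ≤ a ∧ a < s i), filter_le_lt_eq_Ico,
            Fin.card_Ico]
  have hright :
      #{q : Fin n × Fin n | (s q.2 < s q.1 ∧ τ q.1 < τ q.2) ∧ ¬τ q.1 ≤ s q.2} ≤
        ∑ j, ((τ j : ℕ) - s j) := by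
    calc _ ≤ #{q : Fin n × Fin n | s q.2 < τ q.1 ∧ τ q.1 < τ q.2} :=
          card_le_card fun q => by simp only [mem_filter, mem_univ, true_and, not_le]; tauto
      _ = ∑ j, #{i | s j < τ i ∧ τ i < τ j} := by
          simp only [card_filter, Fintype.sum_prod_type_right]
      _ ≤ ∑ j, ((τ j : ℕ) - s j) := sum_le_sum fun j _ => by
          rw [card_filter_comp_equiv τ (fun a => s j < a ∧ a < τ j), filter_lt_lt_eq_Ioo,
            Fin.card_Ioo]
          omega
  calc kendallTau s τ = _ := hsplit.symm
    _ ≤ ∑ i, ((s i : ℕ) - τ i) + ∑ j, ((τ j : ℕ) - s j) := Nat.add_le_add hleft hright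
    _ = ∑ i, Nat.dist (s i) (τ i) := by rw [← sum_add_distrib]; rfl

theorem kendallTau_le_footrule (s τ : Equiv.Perm (Fin n)) :
    (kendallTau s τ : ℤ) ≤ footrule s τ := by
  rw [footrule_eq_sum_dist]
  exact_mod_cast kendallTau_le_sum_dist s τ

theorem footrule_le_two_mul_kendallTau (s τ : Equiv.Perm (Fin n)) :
    footrule s τ ≤ 2 * (kendallTau s τ : ℤ) := by
  rw [footrule_eq_sum_dist]
  exact_mod_cast sum_dist_le_two_mul_kendallTau s τ

end Permutations

namespace IsLinExt

variable {n : ℕ} {π : Fin n → ℕ∞} {s τ : Equiv.Perm (Fin n)}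

lemma lt_iff_lt_of_lt (h : IsLinExt π s τ) {i j : Fin n} (hs : s j < s i) :
    π i < π j ↔ τ i < τ j := by
  obtain ⟨hrank, hlast, htie⟩ := h
  by_cases hi : π i = ⊤ <;> by_cases hj : π j = ⊤
  · rw [hi, hj]
    exact iff_of_false (lt_irrefl _) ((htie j i hj hi).mp hs).asymm
  · rw [hi]
    exact iff_of_false not_top_lt (hlast j i hj hi).asymm
  · rw [hj]
    exact iff_of_true (lt_top_iff_ne_top.mpr hi) (hlast i j hi hj)
  · rw [← hrank i hi, ← hrank j hj, Nat.cast_lt, rank1, rank1, Fin.lt_def]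
    omega

lemma kendallGen_eq_kendallTau (h : IsLinExt π s τ) : kendallGen s π = kendallTau s τ := by
  unfold kendallGen kendallTau
  congr 1
  ext q
  simp only [mem_filter, mem_univ, true_and, and_congr_right_iff]
  exact h.lt_iff_lt_of_lt

end IsLinExt

theorem footrule_algorithm_two_approx_general {n m : ℕ}
    (w : Fin m → ℝ) (hw : ∀ v, 0 ≤ w v)
    (π : Fin m → Fin n → ℕ∞)
    (T : Equiv.Perm (Fin n) → Fin m → Equiv.Perm (Fin n))
    (hT : ∀ s v, IsLinExt (π v) s (T s v))
    (σ : Equiv.Perm (Fin n))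
    (hmin : ∀ s : Equiv.Perm (Fin n),
      ∑ v, w v * ((footrule σ (T σ v) : ℤ) : ℝ) ≤
        ∑ v, w v * ((footrule s (T s v) : ℤ) : ℝ))
    (σstar : Equiv.Perm (Fin n)) :
    ∑ v, w v * (kendallGen σ (π v) : ℝ) ≤
      2 * ∑ v, w v * (kendallGen σstar (π v) : ℝ) := by
  calc ∑ v, w v * (kendallGen σ (π v) : ℝ)
      ≤ ∑ v, w v * ((footrule σ (T σ v) : ℤ) : ℝ) := by
        gcongr with v
        · exact hw v
        · rw [(hT σ v).kendallGen_eq_kendallTau]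
          exact_mod_cast kendallTau_le_footrule σ (T σ v)
    _ ≤ ∑ v, w v * ((footrule σstar (T σstar v) : ℤ) : ℝ) := hmin σstar
    _ ≤ ∑ v, w v * (2 * (kendallGen σstar (π v) : ℝ)) := by
        gcongr with v
        · exact hw v
        · rw [(hT σstar v).kendallGen_eq_kendallTau]
          exact_mod_cast footrule_le_two_mul_kendallTau σstar (T σstar v)
    _ = 2 * ∑ v, w v * (kendallGen σstar (π v) : ℝ) := by
        rw [mul_sum]
        simp only [mul_left_comm]

/-- Correctness of the generalized footrule algorithm: if `σ` minimizes the
average generalized footrule distance `F(·,p)` to a distribution `p` over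
top-lists (given by weights `w` on a finite family `π` of top-lists, with
`T s v` the linear extension of `π v` breaking ties by `s`), then the average
generalized Kendall tau cost of `σ` is at most twice that of any `σ*`. -/
theorem footrule_algorithm_two_approx {n m : ℕ}
    (w : Fin m → ℝ) (hw : ∀ v, 0 ≤ w v) (hw1 : ∑ v, w v = 1)
    (π : Fin m → Fin n → ℕ∞) (hπ : ∀ v, ∃ k ≤ n, IsTopList n k (π v))
    (T : Equiv.Perm (Fin n) → Fin m → Equiv.Perm (Fin n))
    (hT : ∀ s v, IsLinExt (π v) s (T s v))
    (σ : Equiv.Perm (Fin n))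
    (hmin : ∀ s : Equiv.Perm (Fin n),
      ∑ v, w v * ((footrule σ (T σ v) : ℤ) : ℝ) ≤
        ∑ v, w v * ((footrule s (T s v) : ℤ) : ℝ))
    (σstar : Equiv.Perm (Fin n)) :
    ∑ v, w v * (kendallGen σ (π v) : ℝ) ≤
      2 * ∑ v, w v * (kendallGen σstar (π v) : ℝ) :=
  footrule_algorithm_two_approx_general w hw π T hT σ hmin σstar
end

section
/- Let p be a distribution over top-lists on [n]. Suppose a random permutation σ is generated so that for each unordered pair {i,j} with p(π(i) ≠ π(j)) > 0, P(σ(i) > σ(j)) = p(π(i) > π(j)) / p(π(i) ≠ π(j)), and pairs never compared (p(π(i)≠π(j))=0) contribute zero cost. Then E[K(σ,p)] ≤ 2·K(σ*,p) for every permutation σ*. -/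
/-
Write `A i j = p(π(i) < π(j))`. On the ordered pair `(i, j)` RandomSort pays
`A i j · P(σ(j) < σ(i)) = A i j · A j i / (A i j + A j i) ≤ min (A i j) (A j i)`, whereas any
permutation pays `A i j` or `A j i` on the unordered pair `{i, j}`. Summing over both
orientations of every pair gives the factor 2.
-/

open Finset

/-- `p(π(i) < π(j))`: total weight of input top-lists ranking `i` strictly
before `j`. -/
def probLT {n m : ℕ} (w : Fin m → ℝ) (π : Fin m → Fin n → ℕ∞) (i j : Fin n) : ℝ :=
  ∑ v, if π v i < π v j then w v else 0

lemma div_add_mul_le_min {K : Type*} [Field K] [LinearOrder K] [IsStrictOrderedRing K]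
    {a b : K} (ha : 0 ≤ a) (hb : 0 ≤ b) : b / (a + b) * a ≤ min a b := by
  rcases (add_nonneg ha hb).eq_or_lt with hab | hab
  · simpa [← hab] using le_min ha hb
  · rw [div_mul_eq_mul_div, div_le_iff₀ hab]
    rcases le_total a b with h | h
    · rw [min_eq_left h]; nlinarith
    · rw [min_eq_right h]; nlinarith

section PermCost

variable {α : Type*} [Fintype α] [LinearOrder α]

/-- The paper's `K(σ, p)` is `permCost σ (probLT w π)`. -/
def permCost (σ : Equiv.Perm α) (A : α → α → ℝ) : ℝ :=
  ∑ p : α × α, if σ p.2 < σ p.1 then A p.1 p.2 else 0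

lemma sum_mul_permCost (q : Equiv.Perm α → ℝ) (A : α → α → ℝ) :
    ∑ s, q s * permCost s A =
      ∑ p : α × α, (∑ s, if s p.2 < s p.1 then q s else 0) * A p.1 p.2 := by
  simp only [permCost, mul_sum, sum_mul]
  rw [sum_comm]
  refine sum_congr rfl fun p _ => sum_congr rfl fun s _ => ?_
  split_ifs <;> simp [mul_comm]

lemma sum_min_le_two_mul_permCost (σ : Equiv.Perm α) {A : α → α → ℝ}
    (hA : ∀ i, A i i = 0) :
    ∑ p : α × α, min (A p.1 p.2) (A p.2 p.1) ≤ 2 * permCost σ A := by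
  set G : α × α → ℝ := fun p => if σ p.2 < σ p.1 then A p.1 p.2 else 0
  have hpair : ∀ p : α × α, min (A p.1 p.2) (A p.2 p.1) ≤ G p + G p.swap := by
    rintro ⟨i, j⟩
    rcases lt_trichotomy (σ i) (σ j) with h | h | h
    · simp [G, h, h.not_gt]
    · obtain rfl := σ.injective h
      simp [G, hA]
    · simp [G, h, h.not_gt]
  calc ∑ p : α × α, min (A p.1 p.2) (A p.2 p.1)
      ≤ ∑ p : α × α, (G p + G p.swap) := sum_le_sum fun p _ => hpair p
    _ = 2 * permCost σ A := by
      rw [sum_add_distrib,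
        Fintype.sum_equiv (Equiv.prodComm α α) (fun p => G p.swap) G fun _ => rfl]
      simp only [permCost, G]
      ring

end PermCost

section TopLists

variable {n m : ℕ} (w : Fin m → ℝ) (π : Fin m → Fin n → ℕ∞)

lemma probLT_nonneg (hw : ∀ v, 0 ≤ w v) (i j : Fin n) : 0 ≤ probLT w π i j :=
  sum_nonneg fun v _ => by split_ifs <;> simp [hw v]

lemma probLT_self (i : Fin n) : probLT w π i i = 0 := by
  simp [probLT]

lemma sum_mul_kendallGen (s : Equiv.Perm (Fin n)) :
    ∑ v, w v * (kendallGen s (π v) : ℝ) = permCost s (probLT w π) := by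
  simp only [kendallGen, natCast_card_filter, mul_sum, permCost, probLT]
  rw [sum_comm]
  refine sum_congr rfl fun p _ => ?_
  split_ifs with h <;> simp [h]

lemma sum_ite_mul_probLT_le_min (hw : ∀ v, 0 ≤ w v) (q : Equiv.Perm (Fin n) → ℝ)
    (hprob : ∀ i j : Fin n, i ≠ j →
      0 < probLT w π i j + probLT w π j i →
      (∑ s, if s j < s i then q s else 0) =
        probLT w π j i / (probLT w π i j + probLT w π j i))
    (i j : Fin n) :
    (∑ s, if s j < s i then q s else 0) * probLT w π i j ≤
      min (probLT w π i j) (probLT w π j i) := by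
  have ha := probLT_nonneg w π hw i j
  have hb := probLT_nonneg w π hw j i
  by_cases hcompared : i ≠ j ∧ 0 < probLT w π i j + probLT w π j i
  · rw [hprob i j hcompared.1 hcompared.2]
    exact div_add_mul_le_min ha hb
  · have hzero : probLT w π i j = 0 := by
      rcases not_and_or.mp hcompared with hij | hab
      · rw [not_not.mp hij, probLT_self]
      · linarith
    simp [hzero, hb]

end TopLists

theorem randomSort_two_approx_general {n m : ℕ}
    (w : Fin m → ℝ) (hw : ∀ v, 0 ≤ w v)
    (π : Fin m → Fin n → ℕ∞)
    (q : Equiv.Perm (Fin n) → ℝ)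
    (hprob : ∀ i j : Fin n, i ≠ j →
      0 < probLT w π i j + probLT w π j i →
      (∑ s, if s j < s i then q s else 0) =
        probLT w π j i / (probLT w π i j + probLT w π j i))
    (σstar : Equiv.Perm (Fin n)) :
    ∑ s, q s * (∑ v, w v * (kendallGen s (π v) : ℝ)) ≤
      2 * ∑ v, w v * (kendallGen σstar (π v) : ℝ) := by
  simp only [sum_mul_kendallGen, sum_mul_permCost]
  calc ∑ p : Fin n × Fin n, (∑ s, if s p.2 < s p.1 then q s else 0) * probLT w π p.1 p.2
      ≤ ∑ p : Fin n × Fin n, min (probLT w π p.1 p.2) (probLT w π p.2 p.1) :=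
        sum_le_sum fun p _ => sum_ite_mul_probLT_le_min w π hw q hprob p.1 p.2
    _ ≤ 2 * permCost σstar (probLT w π) :=
        sum_min_le_two_mul_permCost σstar (probLT_self w π)

/-- RandomSort / RepeatChoice analysis: if a random permutation `σ` (with
distribution `q` over all permutations) satisfies, for every pair `{i,j}` that
is compared with positive probability,
`P(σ(i) > σ(j)) = p(π(i) > π(j)) / p(π(i) ≠ π(j))`,
then its expected cost is at most twice the cost of any permutation `σ*`. -/
theorem randomSort_two_approx {n m : ℕ}
    (w : Fin m → ℝ) (hw : ∀ v, 0 ≤ w v) (hw1 : ∑ v, w v = 1)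
    (π : Fin m → Fin n → ℕ∞) (hπ : ∀ v, ∃ k ≤ n, IsTopList n k (π v))
    (q : Equiv.Perm (Fin n) → ℝ) (hq : ∀ s, 0 ≤ q s) (hq1 : ∑ s, q s = 1)
    (hprob : ∀ i j : Fin n, i ≠ j →
      0 < probLT w π i j + probLT w π j i →
      (∑ s, if s j < s i then q s else 0) =
        probLT w π j i / (probLT w π i j + probLT w π j i))
    (σstar : Equiv.Perm (Fin n)) :
    ∑ s, q s * (∑ v, w v * (kendallGen s (π v) : ℝ)) ≤
      2 * ∑ v, w v * (kendallGen σstar (π v) : ℝ) :=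
  randomSort_two_approx_general w hw π q hprob σstar
end

section
/- Let r : Fin n → ℝ be arbitrary real values (average ranks). Among all permutations σ of [n], a permutation that sorts candidates by nondecreasing r minimizes Σ_i |σ(i) - r(i)|. -/
/-!
The ranks `f i = σ i + 1` vary together with `g = r`, and for any two such families
`∑ |f i - g i| ≤ ∑ |f (π i) - g i|` for every permutation `π`, by an exchange argument. Let `a`
be the point moved by `π` that is largest for `g` (ties broken by `f`), and `b` the point sent to
`a`. Composing `π` with the transposition of `a` and `b` fixes `a`, so
it moves fewer points, and by the four-point inequality `|p - x| + |q - y| ≤ |q - x| + |p - y|`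
for `p ≤ q`, `x ≤ y` it does not increase the total deviation. Induction on the number of moved
points finishes the proof.
-/

open Finset Equiv Equiv.Perm

section

variable {α : Type*} [Field α] [LinearOrder α] [IsStrictOrderedRing α]

theorem abs_sub_add_abs_sub_le_abs_sub_add_abs_sub {a b x y : α} (hab : a ≤ b) (hxy : x ≤ y) :
    |a - x| + |b - y| ≤ |b - x| + |a - y| := by
  rcases abs_cases (a - x) with ⟨e1, f1⟩ | ⟨e1, f1⟩ <;>
    rcases abs_cases (b - y) with ⟨e2, f2⟩ | ⟨e2, f2⟩ <;>
    rcases abs_cases (b - x) with ⟨e3, f3⟩ | ⟨e3, f3⟩ <;>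
    rcases abs_cases (a - y) with ⟨e4, f4⟩ | ⟨e4, f4⟩ <;>
    rw [e1, e2, e3, e4] <;> linarith

variable {ι : Type*} [Fintype ι] [DecidableEq ι]

theorem Fintype.sum_apply_swap_sub_sum {M : Type*} [AddCommGroup M] (φ : ι → ι → M) {a b : ι}
    (hab : a ≠ b) :
    ∑ i, φ i (swap a b i) - ∑ i, φ i i = φ a b + φ b a - (φ a a + φ b b) := by
  rw [← sum_sub_distrib, Fintype.sum_eq_add a b hab fun i ⟨hia, hib⟩ => by
    rw [swap_apply_of_ne_of_ne hia hib, sub_self]]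
  simp only [swap_apply_left, swap_apply_right]
  abel

theorem Monovary.sum_abs_sub_le_sum_abs_comp_perm_sub {f g : ι → α} (hfg : Monovary f g)
    (π : Perm ι) : ∑ i, |f i - g i| ≤ ∑ i, |f (π i) - g i| := by
  induction h : #π.support using Nat.strong_induction_on generalizing π with
  | _ k ih =>
  obtain hπ | hπ := π.support.eq_empty_or_nonempty
  · simp [support_eq_empty_iff.1 hπ]
  -- Maximality for the lexicographic order gives `f (π a) ≤ f a` even when `g (π a) = g a`.
  obtain ⟨a, ha, hmax⟩ := π.support.exists_max_image (fun i => toLex (g i, f i)) hπ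
  have hπa : π a ≠ a := mem_support.1 ha
  set b := π.symm a
  have hπb : π b = a := π.apply_symm_apply a
  have hba : b ≠ a := fun h => hπa (by rw [← h, hπb, h])
  have hgb : g b ≤ g a := by
    have := hmax b (mem_support.2 (by rwa [hπb, ne_comm]))
    exact (Prod.Lex.toLex_le_toLex.1 this).elim (·.le) (·.1.le)
  have hfπa : f (π a) ≤ f a := by
    have := hmax (π a) (mem_support.2 (π.injective.ne hπa))
    exact (Prod.Lex.toLex_le_toLex.1 this).elim (hfg ·) (·.2)
  have hτ : π * swap b a = swap a (π a) * π := by rw [mul_swap_eq_swap_mul, hπb]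
  have hlt : #(π * swap b a).support < k := h ▸ hτ ▸ card_support_swap_mul hπa
  calc ∑ i, |f i - g i| ≤ ∑ i, |f ((π * swap b a) i) - g i| := ih _ hlt _ rfl
    _ ≤ ∑ i, |f (π i) - g i| := by
      rw [← sub_nonpos]
      simp only [Perm.mul_apply, Fintype.sum_apply_swap_sub_sum (fun i j => |f (π j) - g i|) hba,
        hπb, sub_nonpos]
      linarith [abs_sub_add_abs_sub_le_abs_sub_add_abs_sub hfπa hgb]

end

/-- Sorting by nondecreasing `r` minimizes `Σ_i |σ(i) - r(i)|` over all
permutations `σ` (with ranks `σ(i) ∈ {1,…,n}`). -/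
theorem sort_minimizes_abs_deviation {n : ℕ} (r : Fin n → ℝ)
    (σ : Equiv.Perm (Fin n))
    (hσ : ∀ i j : Fin n, r i < r j → σ i < σ j)
    (σstar : Equiv.Perm (Fin n)) :
    ∑ i, |(((σ i : ℕ) : ℝ) + 1) - r i| ≤
      ∑ i, |(((σstar i : ℕ) : ℝ) + 1) - r i| := by
  have hσr : Monovary (fun i => ((σ i : ℕ) : ℝ) + 1) r := fun i j hij => by
    simpa using (hσ i j hij).le
  simpa using hσr.sum_abs_sub_le_sum_abs_comp_perm_sub (σ⁻¹ * σstar)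
end

section
/- Let r : Fin n → ℝ and let σ sort candidates by nondecreasing r. Then for every permutation σ*, Σ_i max(σ(i) - r(i), 0) ≤ Σ_i max(σ*(i) - r(i), 0). -/
/-!
Write `(k - x)⁺ = (-x)⁺ + ∑_{m < k} layer m x`, where `layer m x ∈ [0, 1]` is the increment of
`t ↦ (t - x)⁺` between `t = m` and `t = m + 1`; it is antitone in `x`. Exchanging the sums, the
objective of a ranking `τ` becomes a constant plus `∑_m ∑_{τ i ≥ m} layer m (r i)`. Every inner sum
runs over exactly `n - m` candidates, and the sorting ranking puts the candidates with largest `r`,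
hence smallest `layer m (r i)`, above the threshold `m`, so it minimizes each inner sum separately.
-/

open Finset

theorem Finset.sum_le_sum_of_card_eq_of_forall_sdiff_le {ι M : Type*} [DecidableEq ι]
    [AddCommMonoid M] [LinearOrder M] [IsOrderedAddMonoid M] {s t : Finset ι} {f : ι → M}
    (hst : #s = #t) (h : ∀ i ∈ s \ t, ∀ j ∈ t \ s, f i ≤ f j) :
    ∑ i ∈ s, f i ≤ ∑ i ∈ t, f i := by
  rcases (t \ s).eq_empty_or_nonempty with hts | hts
  · have hst' : s \ t = ∅ := card_eq_zero.mp (by rw [card_sdiff_comm hst, hts, card_empty])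
    rw [(sdiff_eq_empty_iff_subset.mp hst').antisymm (sdiff_eq_empty_iff_subset.mp hts)]
  obtain ⟨j₀, hj₀, hmin⟩ := (t \ s).exists_min_image f hts
  calc ∑ i ∈ s, f i
      ≤ ∑ i ∈ s ∩ t, f i + #(s \ t) • f j₀ := by
        rw [← sum_inter_add_sum_sdiff s t f]
        gcongr
        exact sum_le_card_nsmul _ _ _ fun i hi ↦ h i hi j₀ hj₀
    _ = ∑ i ∈ t ∩ s, f i + #(t \ s) • f j₀ := by rw [inter_comm, card_sdiff_comm hst]
    _ ≤ ∑ i ∈ t, f i := by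
        rw [← sum_inter_add_sum_sdiff t s f]
        gcongr
        exact card_nsmul_le_sum _ _ _ hmin

theorem sum_rank_ge_le_of_antitone {n : ℕ} {α M : Type*} [LinearOrder α] [AddCommMonoid M]
    [LinearOrder M] [IsOrderedAddMonoid M] (r : Fin n → α) (σ τ : Equiv.Perm (Fin n))
    (hσ : ∀ i j, r i < r j → σ i < σ j) {g : α → M} (hg : Antitone g) (m : ℕ) :
    ∑ i ∈ univ.filter (fun i ↦ m ≤ (σ i : ℕ)), g (r i) ≤
      ∑ i ∈ univ.filter (fun i ↦ m ≤ (τ i : ℕ)), g (r i) := by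
  refine sum_le_sum_of_card_eq_of_forall_sdiff_le
    (card_equiv (σ.trans τ.symm) fun i ↦ by simp) fun i hi j hj ↦ hg ?_
  simp only [mem_sdiff, mem_filter, mem_univ, true_and, not_le] at hi hj
  exact not_lt.mp fun hij ↦ (hσ i j hij).not_gt (Fin.lt_def.mpr (by omega))

noncomputable def layer (m : ℕ) (x : ℝ) : ℝ := min (max ((m : ℝ) + 1 - x) 0) 1

theorem layer_antitone (m : ℕ) : Antitone (layer m) := fun _ _ h ↦ by
  unfold layer
  gcongr

theorem max_natCast_add_one_sub_eq_add_layer (m : ℕ) (x : ℝ) :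
    max ((m : ℝ) + 1 - x) 0 = max ((m : ℝ) - x) 0 + layer m x := by
  unfold layer
  rcases le_total ((m : ℝ) - x) (-1) with h | h
  · rw [max_eq_right (by linarith), max_eq_right (by linarith), min_eq_left zero_le_one, add_zero]
  rcases le_total ((m : ℝ) - x) 0 with h' | h'
  · rw [max_eq_left (by linarith), max_eq_right h', min_eq_left (by linarith), zero_add]
  · rw [max_eq_left (by linarith), max_eq_left h', min_eq_right (by linarith)]
    ring

theorem max_natCast_sub_zero_eq_sum_layer (k : ℕ) (x : ℝ) :
    max ((k : ℝ) - x) 0 = max (-x) 0 + ∑ m ∈ range k, layer m x := by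
  induction k with
  | zero => simp
  | succ k ih =>
    rw [sum_range_succ, ← add_assoc, ← ih, Nat.cast_succ, max_natCast_add_one_sub_eq_add_layer]

theorem sum_max_rank_sub_eq_sum_layer {ι : Type*} [Fintype ι] {n : ℕ} (r : ι → ℝ) (τ : ι → Fin n) :
    ∑ i, max (((τ i : ℕ) : ℝ) + 1 - r i) 0 =
      ∑ i, max (-r i) 0 +
        ∑ m ∈ range n, ∑ i ∈ univ.filter (fun i ↦ m ≤ (τ i : ℕ)), layer m (r i) := by
  simp_rw [← Nat.cast_succ, max_natCast_sub_zero_eq_sum_layer, sum_add_distrib]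
  congr 1
  refine sum_comm' fun i m ↦ ?_
  simp only [mem_univ, mem_range, mem_filter, true_and]
  have := (τ i).isLt
  omega

/-- Sorting by nondecreasing `r` minimizes the sum of positive parts
`Σ_i (σ(i) - r(i))⁺` over all permutations `σ` (ranks `σ(i) ∈ {1,…,n}`). -/
theorem sort_minimizes_positive_deviation {n : ℕ} (r : Fin n → ℝ)
    (σ : Equiv.Perm (Fin n))
    (hσ : ∀ i j : Fin n, r i < r j → σ i < σ j)
    (σstar : Equiv.Perm (Fin n)) :
    ∑ i, max ((((σ i : ℕ) : ℝ) + 1) - r i) 0 ≤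
      ∑ i, max ((((σstar i : ℕ) : ℝ) + 1) - r i) 0 := by
  rw [sum_max_rank_sub_eq_sum_layer r σ, sum_max_rank_sub_eq_sum_layer r σstar]
  gcongr 1
  exact sum_le_sum fun m _ ↦ sum_rank_ge_le_of_antitone r σ σstar hσ (layer_antitone m) m
end

section
/- Let p be a distribution over top-lists on [n] where every candidate has positive score, and suppose max_i Score(i) ≤ α · min_i Score(i). Let σ be the permutation sorting candidates by nondecreasing average rank Rank(i), and σ* any permutation. Then F(σ,p) ≤ (1+2α)·F(σ*,p), and consequently K(σ,p) ≤ (2+4α)·K(σ*,p). (Generalized Borda is a (4α+2)-approximation.) -/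
/-!
Write `F = 2G` with `G(τ) = Σ_i Σ_v w_v (τ(i) - π_v(i))⁺` (1-based positions, ranked pairs
only), and let `S_i`, `R_i` be the score and the average rank. The triangle inequality through
`R_i` and then through `σ*(i)`, together with the reflection
`Σ_v w_v (R_i - π_v(i))⁺ = Σ_v w_v (π_v(i) - R_i)⁺` (valid because `R_i` is a weighted mean), gives
`G(σ) ≤ Σ_i S_i (σ(i) - R_i)⁺ + Σ_i Σ_v w_v (π_v(i) - σ*(i))⁺ + Σ_i S_i (σ*(i) - R_i)⁺`.
The last sum is at most `G(σ*)` by Jensen's inequality, and so is the middle one, because in a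
top list the ranks of the ranked candidates sum to at most their positions. Sorting by `R`
minimises `Σ_i (τ(i) - R_i)⁺`, so the first sum is at most `α Σ_i S_i (σ*(i) - R_i)⁺ ≤ α G(σ*)`.
Hence `F(σ) ≤ (2 + α) F(σ*) ≤ (1 + 2α) F(σ*)`, as `α ≥ 1`.

For the Kendall cost it remains to compare the two costs voter by voter, `F_v ≤ K_v ≤ 2 F_v`,
which is done by counting discordant pairs directly.
-/

open Finset

/-- Score of candidate `i`: the probability that `i` is ranked. -/
def score {n m : ℕ} (w : Fin m → ℝ) (π : Fin m → Fin n → ℕ∞) (i : Fin n) : ℝ :=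
  ∑ v, if π v i ≠ ⊤ then w v else 0

/-- Average rank of candidate `i`: expected rank conditioned on being ranked. -/
noncomputable def avgRank {n m : ℕ} (w : Fin m → ℝ) (π : Fin m → Fin n → ℕ∞)
    (i : Fin n) : ℝ :=
  (∑ v, if π v i ≠ ⊤ then w v * ((WithTop.untopD 0 (π v i) : ℕ) : ℝ) else 0) / score w π i

/-- Average generalized Kendall tau cost of `σ` against the voting profile. -/
def kendallCost {n m : ℕ} (w : Fin m → ℝ) (π : Fin m → Fin n → ℕ∞)
    (σ : Equiv.Perm (Fin n)) : ℝ :=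
  ∑ v, w v * (kendallGen σ (π v) : ℝ)

/-- Average generalized footrule cost:
`F(σ,p) = 2 Σ_i Σ_k p(π(i)=k)·(σ(i)−k)⁺`. -/
def footruleCost {n m : ℕ} (w : Fin m → ℝ) (π : Fin m → Fin n → ℕ∞)
    (σ : Equiv.Perm (Fin n)) : ℝ :=
  2 * ∑ i, ∑ v, (if π v i ≠ ⊤ then
    w v * max ((((σ i : ℕ) : ℝ) + 1) - ((WithTop.untopD 0 (π v i) : ℕ) : ℝ)) 0 else 0)

lemma card_filter_perm {α : Type*} [Fintype α] (σ : Equiv.Perm α) (p : α → Prop)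
    [DecidablePred p] : #{a | p (σ a)} = #{a | p a} := by
  simp only [card_filter]
  exact Equiv.sum_comp σ fun a => if p a then 1 else 0

lemma card_filter_perm_lt {n : ℕ} (σ : Equiv.Perm (Fin n)) (x : Fin n) :
    #{b | σ b < x} = x := by
  rw [card_filter_perm σ (· < x), filter_gt_eq_Iio, Fin.card_Iio]

lemma sum_eq_sum_Icc_of_injOn {ι : Type*} {s : Finset ι} {g : ι → ℕ}
    (hg : ∀ a ∈ s, g a ∈ Icc 1 #s) (hinj : Set.InjOn g s) :
    ∑ a ∈ s, g a = ∑ i ∈ Icc 1 #s, i := by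
  classical
  rw [← sum_image (f := fun i => i) hinj]
  congr 1
  refine eq_of_subset_of_card_le (fun i hi => ?_) ?_
  · obtain ⟨a, ha, rfl⟩ := mem_image.1 hi
    exact hg a ha
  · rw [card_image_of_injOn hinj, Nat.card_Icc, Nat.add_sub_cancel]

lemma card_filter_univ_prod {α β : Type*} [Fintype α] [Fintype β] (p : α × β → Prop)
    [DecidablePred p] : #{q | p q} = ∑ a, #{b | p (a, b)} := by
  simp only [card_filter, Fintype.sum_prod_type]

lemma card_filter_univ_prod_right {α β : Type*} [Fintype α] [Fintype β] (p : α × β → Prop)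
    [DecidablePred p] : #{q | p q} = ∑ b, #{a | p (a, b)} := by
  simp only [card_filter, Fintype.sum_prod_type_right]

lemma sum_card_filter_lt_add_one {α β : Type*} [LinearOrder β] {s : Finset α} {f : α → β}
    (hf : Set.InjOn f s) : ∑ a ∈ s, (#{b ∈ s | f b < f a} + 1) = ∑ i ∈ Icc 1 #s, i := by
  have hlt : ∀ a ∈ s, #{b ∈ s | f b < f a} < #s := fun a ha =>
    card_lt_card (filter_ssubset.2 ⟨a, ha, lt_irrefl _⟩)
  have hmono : ∀ a ∈ s, ∀ a' ∈ s, f a < f a' → #{b ∈ s | f b < f a} < #{b ∈ s | f b < f a'} :=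
    fun a ha a' _ haa' => card_lt_card <| ssubset_iff_of_subset
      (fun b hb => mem_filter.2 ⟨(mem_filter.1 hb).1, (mem_filter.1 hb).2.trans haa'⟩) |>.2
        ⟨a, mem_filter.2 ⟨ha, haa'⟩, fun h => lt_irrefl _ (mem_filter.1 h).2⟩
  refine sum_eq_sum_Icc_of_injOn (fun a ha => mem_Icc.2 ⟨by omega, hlt a ha⟩) ?_
  intro a ha a' ha' heq
  by_contra hne
  simp only [Nat.add_right_cancel_iff] at heq
  rcases lt_or_gt_of_ne (hf.ne ha ha' hne) with h | h
  · exact (hmono a ha a' ha' h).ne heq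
  · exact (hmono a' ha' a ha h).ne' heq

/-- `σ a + 1` is the (1-based) position of `a`; the truncated subtraction of `ℕ` is the
positive part. -/
def topFootrule {n : ℕ} (σ : Equiv.Perm (Fin n)) (ρ : Fin n → ℕ∞) : ℕ :=
  ∑ a, if ρ a ≠ ⊤ then (σ a : ℕ) + 1 - (ρ a).toNat else 0

def topFootruleRev {n : ℕ} (σ : Equiv.Perm (Fin n)) (ρ : Fin n → ℕ∞) : ℕ :=
  ∑ a, if ρ a ≠ ⊤ then (ρ a).toNat - ((σ a : ℕ) + 1) else 0

lemma card_lt_lt_rank_le_topFootruleRev {n : ℕ} (σ : Equiv.Perm (Fin n)) (ρ : Fin n → ℕ∞) :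
    #{q : Fin n × Fin n | σ q.2 < σ q.1 ∧ ρ q.2 ≠ ⊤ ∧ ((σ q.1 : ℕ) : ℕ∞) < ρ q.2} ≤
      topFootruleRev σ ρ := by
  rw [card_filter_univ_prod_right]
  refine sum_le_sum fun b _ => ?_
  split_ifs with hb
  · lift ρ b to ℕ using hb with r
    calc #{a | σ b < σ a ∧ (r : ℕ∞) ≠ ⊤ ∧ ((σ a : ℕ) : ℕ∞) < r}
        ≤ #(Ioo (σ b : ℕ) r) := by
          refine card_le_card_of_injOn (fun a => (σ a : ℕ)) (fun a ha => ?_)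
            (fun a _ a' _ h => σ.injective (Fin.ext h))
          have ha := (mem_filter.1 (mem_coe.1 ha)).2
          rw [Nat.cast_lt] at ha
          exact mem_Ioo.2 ⟨ha.1, ha.2.2⟩
      _ = r - ((σ b : ℕ) + 1) := by rw [Nat.card_Ioo, Nat.sub_sub]
      _ = _ := by rw [ENat.toNat_natCast]
  · simp_all

namespace IsTopList

variable {n k : ℕ} {ρ : Fin n → ℕ∞}

lemma toNat_mem_Icc (h : IsTopList n k ρ) {a : Fin n} (ha : ρ a ≠ ⊤) :
    (ρ a).toNat ∈ Icc 1 k := by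
  obtain ⟨h1, hk⟩ := h.1 a ha
  lift ρ a to ℕ using ha with r
  simp only [ENat.toNat_natCast, mem_Icc]
  exact ⟨by exact_mod_cast h1, by exact_mod_cast hk⟩

lemma injOn_toNat (h : IsTopList n k ρ) :
    Set.InjOn (fun a => (ρ a).toNat) ({a | ρ a ≠ ⊤} : Finset (Fin n)) := by
  intro a ha b hb hab
  replace ha := (mem_filter.1 (mem_coe.1 ha)).2
  replace hb := (mem_filter.1 (mem_coe.1 hb)).2
  obtain ⟨r1, rk⟩ := mem_Icc.1 (h.toNat_mem_Icc ha)
  obtain ⟨c, -, hc⟩ := h.2 _ r1 rk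
  have hb' : ρ b = (ρ a).toNat := by
    rw [← ENat.natCast_toNat hb]
    exact congrArg _ hab.symm
  rw [hc a (ENat.natCast_toNat ha).symm, hc b hb']

lemma card_ranked (h : IsTopList n k ρ) : #{a | ρ a ≠ ⊤} = k := by
  have himage : image (fun a => (ρ a).toNat) {a | ρ a ≠ ⊤} = Icc 1 k := by
    ext r
    simp only [mem_image, mem_filter, mem_univ, true_and]
    constructor
    · rintro ⟨a, ha, rfl⟩
      exact h.toNat_mem_Icc ha
    · intro hr
      obtain ⟨a, ha, -⟩ := h.2 r (mem_Icc.1 hr).1 (mem_Icc.1 hr).2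
      exact ⟨a, by simp [ha], by simp [ha]⟩
  rw [← card_image_of_injOn h.injOn_toNat, himage, Nat.card_Icc,
    Nat.add_sub_cancel]

lemma card_le_natCast_le (h : IsTopList n k ρ) (r : ℕ) : #{b | ρ b ≤ r} ≤ r := by
  have hne : ∀ b ∈ ({b | ρ b ≤ r} : Finset (Fin n)), ρ b ≠ ⊤ := fun b hb =>
    ne_top_of_le_ne_top (ENat.natCast_ne_top r) (mem_filter.1 hb).2
  calc #{b | ρ b ≤ r} ≤ #(Icc 1 r) := by
        refine card_le_card_of_injOn (fun b => (ρ b).toNat) (fun b hb => ?_) ?_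
        · refine mem_Icc.2 ⟨(mem_Icc.1 (h.toNat_mem_Icc (hne b hb))).1, ?_⟩
          exact ENat.toNat_le_of_le_natCast (mem_filter.1 hb).2
        · exact h.injOn_toNat.mono fun b hb => by simpa using hne b hb
    _ = r := by simp

lemma sum_toNat_eq_sum_card_lt (h : IsTopList n k ρ) (σ : Equiv.Perm (Fin n)) :
    ∑ a ∈ {a | ρ a ≠ ⊤}, (ρ a).toNat =
      ∑ a ∈ {a | ρ a ≠ ⊤}, (#{b ∈ {a | ρ a ≠ ⊤} | σ b < σ a} + 1) := by
  rw [sum_card_filter_lt_add_one σ.injective.injOn]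
  refine sum_eq_sum_Icc_of_injOn (fun a ha => ?_) h.injOn_toNat
  rw [h.card_ranked]
  exact h.toNat_mem_Icc (mem_filter.1 ha).2

lemma sum_card_unranked_add_topFootruleRev (h : IsTopList n k ρ) (σ : Equiv.Perm (Fin n)) :
    ∑ a ∈ {a | ρ a ≠ ⊤}, #{b | ρ b = ⊤ ∧ σ b < σ a} + topFootruleRev σ ρ = topFootrule σ ρ := by
  have key := h.sum_toNat_eq_sum_card_lt σ
  simp only [topFootrule, topFootruleRev, ← sum_filter] at key ⊢
  set s : Finset (Fin n) := {a | ρ a ≠ ⊤}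
  have hpos : ∀ a, #{b | ρ b = ⊤ ∧ σ b < σ a} + #{b ∈ s | σ b < σ a} = σ a := by
    intro a
    rw [← card_filter_perm_lt σ (σ a), ← card_filter_add_card_filter_not
      (s := ({b | σ b < σ a} : Finset (Fin n))) (fun b => ρ b = ⊤)]
    simp only [s, filter_filter, and_comm]
  have hsum : ∑ a ∈ s, (#{b | ρ b = ⊤ ∧ σ b < σ a} + ((ρ a).toNat - ((σ a : ℕ) + 1))) +
      ∑ a ∈ s, (#{b ∈ s | σ b < σ a} + 1) =
      ∑ a ∈ s, ((σ a : ℕ) + 1 - (ρ a).toNat) + ∑ a ∈ s, (ρ a).toNat := by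
    rw [← sum_add_distrib, ← sum_add_distrib]
    refine sum_congr rfl fun a _ => ?_
    have := hpos a
    omega
  rw [key, sum_add_distrib] at hsum
  omega

lemma add_one_sub_toNat_le_card (h : IsTopList n k ρ) (σ : Equiv.Perm (Fin n)) {a : Fin n}
    (ha : ρ a ≠ ⊤) : (σ a : ℕ) + 1 - (ρ a).toNat ≤ #{b | σ b < σ a ∧ ρ a < ρ b} := by
  have hsplit : #{b | σ b < σ a ∧ ρ a < ρ b} + #{b | σ b < σ a ∧ ¬ ρ a < ρ b} = σ a := by
    rw [← card_filter_perm_lt σ (σ a), ← card_filter_add_card_filter_not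
      (s := ({b | σ b < σ a} : Finset (Fin n))) (fun b => ρ a < ρ b), filter_filter, filter_filter]
  have hle : #{b | σ b < σ a ∧ ¬ ρ a < ρ b} ≤ (ρ a).toNat - 1 :=
    calc #{b | σ b < σ a ∧ ¬ ρ a < ρ b}
        ≤ #(({b | ρ b ≤ ((ρ a).toNat : ℕ∞)} : Finset (Fin n)).erase a) := by
          refine card_le_card fun b hb => ?_
          simp only [mem_filter, mem_univ, true_and, not_lt] at hb
          simp only [mem_erase, mem_filter, mem_univ, true_and, ENat.natCast_toNat ha]
          exact ⟨fun hba => lt_irrefl _ (hba ▸ hb.1), hb.2⟩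
      _ ≤ (ρ a).toNat - 1 := by
          rw [card_erase_of_mem (by simp [ENat.natCast_toNat ha])]
          exact Nat.sub_le_sub_right (h.card_le_natCast_le _) 1
  have h1 := (mem_Icc.1 (h.toNat_mem_Icc ha)).1
  omega

lemma card_rank_lt_le_le_topFootrule (h : IsTopList n k ρ) (σ : Equiv.Perm (Fin n)) :
    #{q : Fin n × Fin n | ρ q.1 < ρ q.2 ∧ ρ q.2 ≤ ((σ q.1 : ℕ) : ℕ∞)} ≤ topFootrule σ ρ := by
  rw [card_filter_univ_prod]
  refine sum_le_sum fun a _ => ?_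
  split_ifs with ha
  · have hne : ∀ b ∈ ({b | ρ a < ρ b ∧ ρ b ≤ ((σ a : ℕ) : ℕ∞)} : Finset (Fin n)), ρ b ≠ ⊤ :=
      fun b hb => ne_top_of_le_ne_top (ENat.natCast_ne_top _) (mem_filter.1 hb).2.2
    calc #{b | ρ a < ρ b ∧ ρ b ≤ ((σ a : ℕ) : ℕ∞)} ≤ #(Ioc (ρ a).toNat (σ a)) := by
          refine card_le_card_of_injOn (fun b => (ρ b).toNat) (fun b hb => ?_)
            (h.injOn_toNat.mono fun b hb => by simpa using hne b hb)
          have hb' := (mem_filter.1 hb).2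
          rw [← ENat.natCast_toNat ha, ← ENat.natCast_toNat (hne b hb), Nat.cast_lt,
            Nat.cast_le] at hb'
          exact mem_Ioc.2 hb'
      _ ≤ (σ a : ℕ) + 1 - (ρ a).toNat := by rw [Nat.card_Ioc]; omega
  · simp_all

theorem topFootrule_le_kendallGen (h : IsTopList n k ρ) (σ : Equiv.Perm (Fin n)) :
    topFootrule σ ρ ≤ kendallGen σ ρ := by
  rw [kendallGen, card_filter_univ_prod]
  refine sum_le_sum fun a _ => ?_
  split_ifs with ha
  · exact h.add_one_sub_toNat_le_card σ ha
  · exact Nat.zero_le _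

theorem kendallGen_le_two_mul_topFootrule (h : IsTopList n k ρ) (σ : Equiv.Perm (Fin n)) :
    kendallGen σ ρ ≤ 2 * topFootrule σ ρ := by
  -- A discordant pair `(a, b)` has `b` unranked, or the rank of `b` at most `σ a`, or beyond it.
  -- The second kind is charged to `a`, the third to `b`, and the balance identity
  -- `sum_card_unranked_add_topFootruleRev` accounts for the first and third kinds together.
  have hsub : (univ.filter fun q : Fin n × Fin n => σ q.2 < σ q.1 ∧ ρ q.1 < ρ q.2) ⊆
      (({q | ρ q.1 ≠ ⊤ ∧ ρ q.2 = ⊤ ∧ σ q.2 < σ q.1} : Finset (Fin n × Fin n)) ∪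
        ({q | ρ q.1 < ρ q.2 ∧ ρ q.2 ≤ ((σ q.1 : ℕ) : ℕ∞)} : Finset (Fin n × Fin n))) ∪
        ({q | σ q.2 < σ q.1 ∧ ρ q.2 ≠ ⊤ ∧ ((σ q.1 : ℕ) : ℕ∞) < ρ q.2} :
          Finset (Fin n × Fin n)) := by
    intro q hq
    simp only [mem_filter, mem_univ, true_and, mem_union] at hq ⊢
    by_cases h2 : ρ q.2 = ⊤
    · exact Or.inl (Or.inl ⟨hq.2.ne_top, h2, hq.1⟩)
    · rcases le_or_gt (ρ q.2) ((σ q.1 : ℕ) : ℕ∞) with h3 | h3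
      · exact Or.inl (Or.inr ⟨hq.2, h3⟩)
      · exact Or.inr ⟨hq.1, h2, h3⟩
  have hunranked : #{q : Fin n × Fin n | ρ q.1 ≠ ⊤ ∧ ρ q.2 = ⊤ ∧ σ q.2 < σ q.1} =
      ∑ a ∈ {a | ρ a ≠ ⊤}, #{b | ρ b = ⊤ ∧ σ b < σ a} := by
    rw [card_filter_univ_prod, sum_filter]
    refine sum_congr rfl fun a _ => ?_
    split_ifs with ha <;> simp [ha]
  have hbalance := h.sum_card_unranked_add_topFootruleRev σ
  have hlate := h.card_rank_lt_le_le_topFootrule σ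
  have hearly := card_lt_lt_rank_le_topFootruleRev σ ρ
  have hunion := (card_le_card hsub).trans
    ((card_union_le _ _).trans (Nat.add_le_add_right (card_union_le _ _) _))
  rw [kendallGen]
  omega

theorem topFootruleRev_le_topFootrule (h : IsTopList n k ρ) (σ : Equiv.Perm (Fin n)) :
    topFootruleRev σ ρ ≤ topFootrule σ ρ :=
  (h.sum_card_unranked_add_topFootruleRev σ).le.trans' (Nat.le_add_left _ _)

end IsTopList

lemma natCast_tsub_eq_max (a b : ℕ) : ((a - b : ℕ) : ℝ) = max ((a : ℝ) - b) 0 := by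
  rcases le_total b a with h | h
  · rw [Nat.cast_sub h, max_eq_left (sub_nonneg.2 (Nat.cast_le.2 h))]
  · rw [Nat.sub_eq_zero_of_le h, max_eq_right (sub_nonpos.2 (Nat.cast_le.2 h)), Nat.cast_zero]

lemma max_sub_zero_le_add (a b c : ℝ) : max (a - b) 0 ≤ max (a - c) 0 + max (c - b) 0 :=
  max_le (by linarith [le_max_left (a - c) 0, le_max_left (c - b) 0])
    (add_nonneg (le_max_right _ _) (le_max_right _ _))

section WeightedMean

variable {V : Type*} {t : Finset V} {w x : V → ℝ} {R : ℝ}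

lemma mul_max_sub_le_sum_mul_max_sub (hw : ∀ v ∈ t, 0 ≤ w v)
    (hR : ∑ v ∈ t, w v * x v = (∑ v ∈ t, w v) * R) (y : ℝ) :
    (∑ v ∈ t, w v) * max (y - R) 0 ≤ ∑ v ∈ t, w v * max (y - x v) 0 :=
  calc (∑ v ∈ t, w v) * max (y - R) 0 = max (∑ v ∈ t, w v * (y - x v)) 0 := by
        simp only [mul_sub, sum_sub_distrib, ← sum_mul, hR]
        rw [mul_max_of_nonneg _ _ (sum_nonneg hw), mul_zero, mul_sub]
    _ ≤ ∑ v ∈ t, max (w v * (y - x v)) 0 :=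
        max_le (sum_le_sum fun v _ => le_max_left _ _) (sum_nonneg fun v _ => le_max_right _ _)
    _ = ∑ v ∈ t, w v * max (y - x v) 0 :=
        sum_congr rfl fun v hv => by rw [mul_max_of_nonneg _ _ (hw v hv), mul_zero]

lemma sum_mul_max_mean_sub_eq (hR : ∑ v ∈ t, w v * x v = (∑ v ∈ t, w v) * R) :
    ∑ v ∈ t, w v * max (R - x v) 0 = ∑ v ∈ t, w v * max (x v - R) 0 := by
  have hzero : ∑ v ∈ t, w v * (R - x v) = 0 := by
    rw [← sub_eq_zero.2 hR.symm]
    simp only [mul_sub, sum_sub_distrib, sum_mul]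
  calc ∑ v ∈ t, w v * max (R - x v) 0
      = ∑ v ∈ t, (w v * max (x v - R) 0 + w v * (R - x v)) := sum_congr rfl fun v _ => by
        have hsplit := max_zero_sub_max_neg_zero_eq_self (R - x v)
        rw [neg_sub] at hsplit
        linear_combination w v * hsplit
    _ = ∑ v ∈ t, w v * max (x v - R) 0 := by rw [sum_add_distrib, hzero, add_zero]

lemma sum_mul_max_sub_le (hw : ∀ v ∈ t, 0 ≤ w v)
    (hR : ∑ v ∈ t, w v * x v = (∑ v ∈ t, w v) * R) (y y' : ℝ) :
    ∑ v ∈ t, w v * max (y - x v) 0 ≤ (∑ v ∈ t, w v) * max (y - R) 0 +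
      ∑ v ∈ t, w v * max (x v - y') 0 + (∑ v ∈ t, w v) * max (y' - R) 0 := by
  have htri : ∀ a b c : V → ℝ, ∑ v ∈ t, w v * max (a v - b v) 0 ≤
      ∑ v ∈ t, w v * max (a v - c v) 0 + ∑ v ∈ t, w v * max (c v - b v) 0 := fun a b c => by
    rw [← sum_add_distrib]
    exact sum_le_sum fun v hv => by
      rw [← mul_add]
      exact mul_le_mul_of_nonneg_left (max_sub_zero_le_add _ _ _) (hw v hv)
  have hconst : ∀ z, ∑ v ∈ t, w v * z = (∑ v ∈ t, w v) * z := fun z => (sum_mul _ _ _).symm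
  have h1 := htri (fun _ => y) x (fun _ => R)
  have h2 := htri x (fun _ => R) (fun _ => y')
  simp only [hconst] at h1 h2
  rw [sum_mul_max_mean_sub_eq hR] at h1
  linarith

end WeightedMean

lemma sum_le_sum_of_card_eq {ι : Type*} [DecidableEq ι] {T T' : Finset ι} {c : ι → ℝ}
    (hcard : #T = #T') (hc : ∀ i ∈ T, ∀ j ∉ T, c i ≤ c j) : ∑ i ∈ T, c i ≤ ∑ i ∈ T', c i := by
  have hdiff : #(T \ T') = #(T' \ T) := by
    have := card_inter_add_card_sdiff T T'
    have := card_inter_add_card_sdiff T' T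
    rw [inter_comm] at this
    omega
  have hsdiff : ∑ i ∈ T \ T', c i ≤ ∑ i ∈ T' \ T, c i := by
    rcases (T' \ T).eq_empty_or_nonempty with hempty | hne
    · rw [hempty, card_empty, card_eq_zero] at hdiff
      rw [hdiff, hempty]
    obtain ⟨j, hj, hjmin⟩ := exists_min_image (T' \ T) c hne
    calc ∑ i ∈ T \ T', c i ≤ #(T \ T') • c j := sum_le_card_nsmul _ _ _ fun i hi =>
          hc i (mem_sdiff.1 hi).1 j (mem_sdiff.1 hj).2
      _ = #(T' \ T) • c j := by rw [hdiff]
      _ ≤ ∑ i ∈ T' \ T, c i := card_nsmul_le_sum _ _ _ hjmin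
  rw [← sum_inter_add_sum_sdiff T T', ← sum_inter_add_sum_sdiff T' T, inter_comm]
  linarith

lemma antitone_max_add_one_sub_sub_max_sub (s : ℝ) :
    Antitone fun r : ℝ => max (s + 1 - r) 0 - max (s - r) 0 := by
  intro r r' h
  simp only [max_def]
  split_ifs <;> linarith

lemma max_natCast_sub_eq (m : ℕ) (r : ℝ) : max ((m : ℝ) - r) 0 =
    max (-r) 0 + ∑ s ∈ range m, (max ((s : ℝ) + 1 - r) 0 - max ((s : ℝ) - r) 0) := by
  have := sum_range_sub (fun s : ℕ => max ((s : ℝ) - r) 0) m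
  push_cast at this
  rw [this]
  simp

theorem sum_max_add_one_sub_le_of_sorted {n : ℕ} {R : Fin n → ℝ} {σ : Equiv.Perm (Fin n)}
    (hσ : ∀ i j, R i < R j → σ i < σ j) (τ : Equiv.Perm (Fin n)) :
    ∑ i, max (((σ i : ℕ) : ℝ) + 1 - R i) 0 ≤ ∑ i, max (((τ i : ℕ) : ℝ) + 1 - R i) 0 := by
  -- Layer `s` of `(m - r)⁺` is `(s + 1 - r)⁺ - (s - r)⁺`, antitone in `r`; in every layer
  -- `σ` keeps the `n - s` candidates of largest `R`.
  have hlayers : ∀ π : Equiv.Perm (Fin n), ∑ i, max (((π i : ℕ) : ℝ) + 1 - R i) 0 =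
      ∑ i, max (-R i) 0 + ∑ s ∈ range n, ∑ i ∈ {i | s ≤ (π i : ℕ)},
        (max ((s : ℝ) + 1 - R i) 0 - max ((s : ℝ) - R i) 0) := by
    intro π
    have hcast : ∀ i, ((π i : ℕ) : ℝ) + 1 = (((π i : ℕ) + 1 : ℕ) : ℝ) := fun i => by push_cast; rfl
    simp only [hcast]
    rw [sum_congr rfl fun i _ => max_natCast_sub_eq _ _, sum_add_distrib]
    congr 1
    exact sum_comm' fun i s => by simp only [mem_univ, mem_range, mem_filter, true_and]; omega
  rw [hlayers σ, hlayers τ, add_le_add_iff_left]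
  refine sum_le_sum fun s _ => sum_le_sum_of_card_eq ?_ fun i hi j hj => ?_
  · rw [card_filter_perm σ (fun p => s ≤ (p : ℕ)), card_filter_perm τ (fun p => s ≤ (p : ℕ))]
  · simp only [mem_filter, mem_univ, true_and, not_le] at hi hj
    exact antitone_max_add_one_sub_sub_max_sub s
      (not_lt.1 fun hij => (hσ i j hij).not_gt (Fin.lt_def.2 (by omega)))

lemma sum_mul_le_mul_sum_mul {ι : Type*} [Fintype ι] {S A B : ι → ℝ} {α : ℝ} (hα : 0 ≤ α)
    (hS0 : ∀ i, 0 ≤ S i) (hS : ∀ i j, S i ≤ α * S j) (hA : ∀ i, 0 ≤ A i) (hB : ∀ i, 0 ≤ B i)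
    (hAB : ∑ i, A i ≤ ∑ i, B i) : ∑ i, S i * A i ≤ α * ∑ i, S i * B i := by
  rcases isEmpty_or_nonempty ι with hι | hι
  · simp
  obtain ⟨j, -, hj⟩ := exists_min_image univ S univ_nonempty
  calc ∑ i, S i * A i ≤ ∑ i, α * S j * A i :=
        sum_le_sum fun i _ => mul_le_mul_of_nonneg_right (hS i j) (hA i)
    _ ≤ ∑ i, α * S j * B i := by
        simp only [← mul_sum]
        exact mul_le_mul_of_nonneg_left hAB (mul_nonneg hα (hS0 j))
    _ = α * ∑ i, S j * B i := by
        rw [mul_sum]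
        exact sum_congr rfl fun i _ => mul_assoc _ _ _
    _ ≤ α * ∑ i, S i * B i := mul_le_mul_of_nonneg_left
          (sum_le_sum fun i _ => mul_le_mul_of_nonneg_right (hj i (mem_univ i)) (hB i)) hα

section Profile

variable {n m : ℕ} (w : Fin m → ℝ) (π : Fin m → Fin n → ℕ∞)

lemma sum_sum_filter_mul_max_eq (f g : Fin m → Fin n → ℕ) :
    ∑ i, ∑ v ∈ {v | π v i ≠ ⊤}, w v * max ((f v i : ℝ) - g v i) 0 =
      ∑ v, w v * ((∑ i, if π v i ≠ ⊤ then f v i - g v i else 0 : ℕ) : ℝ) := by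
  simp only [sum_filter]
  rw [sum_comm]
  refine sum_congr rfl fun v _ => ?_
  rw [Nat.cast_sum, mul_sum]
  refine sum_congr rfl fun i _ => ?_
  split_ifs <;> simp [natCast_tsub_eq_max]

lemma footruleCost_eq_sum_sum (σ : Equiv.Perm (Fin n)) :
    footruleCost w π σ =
      2 * ∑ i, ∑ v ∈ {v | π v i ≠ ⊤}, w v * max (((σ i : ℕ) : ℝ) + 1 - (π v i).toNat) 0 := by
  simp only [footruleCost, sum_filter]
  rfl

lemma footruleCost_eq_sum_topFootrule (σ : Equiv.Perm (Fin n)) :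
    footruleCost w π σ = 2 * ∑ v, w v * (topFootrule σ (π v) : ℝ) := by
  have := sum_sum_filter_mul_max_eq w π (fun _ i => (σ i : ℕ) + 1) (fun v i => (π v i).toNat)
  simp only [Nat.cast_add, Nat.cast_one] at this
  rw [footruleCost_eq_sum_sum, this]
  rfl

lemma sum_sum_filter_mul_max_toNat_sub_eq (σ : Equiv.Perm (Fin n)) :
    ∑ i, ∑ v ∈ {v | π v i ≠ ⊤}, w v * max ((π v i).toNat - (((σ i : ℕ) : ℝ) + 1)) 0 =
      ∑ v, w v * (topFootruleRev σ (π v) : ℝ) := by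
  have := sum_sum_filter_mul_max_eq w π (fun v i => (π v i).toNat) (fun _ i => (σ i : ℕ) + 1)
  simp only [Nat.cast_add, Nat.cast_one] at this
  exact this

lemma score_eq_sum_filter (i : Fin n) : score w π i = ∑ v ∈ {v | π v i ≠ ⊤}, w v :=
  (sum_filter _ _).symm

lemma sum_filter_mul_toNat_eq {i : Fin n} (hi : score w π i ≠ 0) :
    ∑ v ∈ {v | π v i ≠ ⊤}, w v * ((π v i).toNat : ℝ) = score w π i * avgRank w π i := by
  rw [avgRank, mul_div_cancel₀ _ hi, sum_filter]
  rfl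

variable {w π}

theorem kendallCost_le_footruleCost (hw : ∀ v, 0 ≤ w v) (hπ : ∀ v, ∃ k, IsTopList n k (π v))
    (σ : Equiv.Perm (Fin n)) : kendallCost w π σ ≤ footruleCost w π σ := by
  rw [kendallCost, footruleCost_eq_sum_topFootrule, mul_sum]
  refine sum_le_sum fun v _ => ?_
  obtain ⟨k, hk⟩ := hπ v
  have hK : (kendallGen σ (π v) : ℝ) ≤ 2 * topFootrule σ (π v) := by
    exact_mod_cast hk.kendallGen_le_two_mul_topFootrule σ
  linarith [mul_le_mul_of_nonneg_left hK (hw v)]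

theorem footruleCost_le_two_mul_kendallCost (hw : ∀ v, 0 ≤ w v)
    (hπ : ∀ v, ∃ k, IsTopList n k (π v)) (σ : Equiv.Perm (Fin n)) :
    footruleCost w π σ ≤ 2 * kendallCost w π σ := by
  rw [kendallCost, footruleCost_eq_sum_topFootrule]
  refine mul_le_mul_of_nonneg_left (sum_le_sum fun v _ => ?_) zero_le_two
  obtain ⟨k, hk⟩ := hπ v
  exact mul_le_mul_of_nonneg_left (by exact_mod_cast hk.topFootrule_le_kendallGen σ) (hw v)

theorem footruleCost_le_of_sorted {α : ℝ} (hw : ∀ v, 0 ≤ w v)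
    (hπ : ∀ v, ∃ k, IsTopList n k (π v)) (hscore : ∀ i, 0 < score w π i)
    (hα0 : 0 ≤ α) (hα : ∀ i j, score w π i ≤ α * score w π j) {σ : Equiv.Perm (Fin n)}
    (hσ : ∀ i j, avgRank w π i < avgRank w π j → σ i < σ j) (σstar : Equiv.Perm (Fin n)) :
    footruleCost w π σ ≤ (2 + α) * footruleCost w π σstar := by
  set A : Equiv.Perm (Fin n) → Fin n → ℝ := fun τ i =>
    max (((τ i : ℕ) : ℝ) + 1 - avgRank w π i) 0
  set G : Equiv.Perm (Fin n) → ℝ := fun τ =>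
    ∑ i, ∑ v ∈ {v | π v i ≠ ⊤}, w v * max (((τ i : ℕ) : ℝ) + 1 - (π v i).toNat) 0
  have hG : ∀ τ, footruleCost w π τ = 2 * G τ := footruleCost_eq_sum_sum w π
  have hmean : ∀ i, ∑ v ∈ {v | π v i ≠ ⊤}, w v * ((π v i).toNat : ℝ) =
      (∑ v ∈ {v | π v i ≠ ⊤}, w v) * avgRank w π i := fun i => by
    rw [← score_eq_sum_filter w π i]
    exact sum_filter_mul_toNat_eq w π (hscore i).ne'
  have hjensen : ∑ i, score w π i * A σstar i ≤ G σstar := sum_le_sum fun i _ => by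
    rw [score_eq_sum_filter]
    exact mul_max_sub_le_sum_mul_max_sub (fun v _ => hw v) (hmean i) _
  have hsplit : G σ ≤ ∑ i, score w π i * A σ i +
      ∑ i, ∑ v ∈ {v | π v i ≠ ⊤}, w v * max ((π v i).toNat - (((σstar i : ℕ) : ℝ) + 1)) 0 +
      ∑ i, score w π i * A σstar i := by
    simp only [G, A, score_eq_sum_filter, ← sum_add_distrib]
    exact sum_le_sum fun i _ => sum_mul_max_sub_le (fun v _ => hw v) (hmean i) _ _
  have hrev : ∑ i, ∑ v ∈ {v | π v i ≠ ⊤}, w v * max ((π v i).toNat - (((σstar i : ℕ) : ℝ) + 1)) 0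
      ≤ G σstar := by
    have hF := footruleCost_eq_sum_topFootrule w π σstar
    rw [hG, mul_right_inj' two_ne_zero] at hF
    rw [sum_sum_filter_mul_max_toNat_sub_eq, hF]
    refine sum_le_sum fun v _ => mul_le_mul_of_nonneg_left ?_ (hw v)
    obtain ⟨k, hk⟩ := hπ v
    exact_mod_cast hk.topFootruleRev_le_topFootrule σstar
  have hweights : ∑ i, score w π i * A σ i ≤ α * ∑ i, score w π i * A σstar i :=
    sum_mul_le_mul_sum_mul hα0 (fun i => (hscore i).le) hα (fun _ => le_max_right _ _)
      (fun _ => le_max_right _ _) (sum_max_add_one_sub_le_of_sorted hσ σstar)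
  rw [hG, hG]
  linarith [mul_le_mul_of_nonneg_left hjensen hα0]

end Profile

theorem borda_approx_general {n m : ℕ} (α : ℝ)
    (w : Fin m → ℝ) (hw : ∀ v, 0 ≤ w v)
    (π : Fin m → Fin n → ℕ∞) (hπ : ∀ v, ∃ k ≤ n, IsTopList n k (π v))
    (hscore : ∀ i, 0 < score w π i)
    (hα : ∀ i j : Fin n, score w π i ≤ α * score w π j)
    (σ : Equiv.Perm (Fin n))
    (hσ : ∀ i j : Fin n, avgRank w π i < avgRank w π j → σ i < σ j)
    (σstar : Equiv.Perm (Fin n)) :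
    footruleCost w π σ ≤ (1 + 2 * α) * footruleCost w π σstar ∧
      kendallCost w π σ ≤ (2 + 4 * α) * kendallCost w π σstar := by
  have hπ' : ∀ v, ∃ k, IsTopList n k (π v) := fun v => (hπ v).imp fun _ hk => hk.2
  rcases isEmpty_or_nonempty (Fin n) with hn | ⟨⟨i⟩⟩
  · simp [footruleCost, kendallCost, kendallGen]
  have hα1 : 1 ≤ α := le_of_mul_le_mul_right (by rw [one_mul]; exact hα i i) (hscore i)
  have hF0 : 0 ≤ footruleCost w π σstar := by
    rw [footruleCost_eq_sum_topFootrule]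
    exact mul_nonneg zero_le_two (sum_nonneg fun v _ => mul_nonneg (hw v) (Nat.cast_nonneg _))
  have hfoot : footruleCost w π σ ≤ (1 + 2 * α) * footruleCost w π σstar :=
    calc footruleCost w π σ ≤ (2 + α) * footruleCost w π σstar :=
          footruleCost_le_of_sorted hw hπ' hscore (by linarith) hα hσ σstar
      _ ≤ (1 + 2 * α) * footruleCost w π σstar := mul_le_mul_of_nonneg_right (by linarith) hF0
  refine ⟨hfoot, ?_⟩
  calc kendallCost w π σ ≤ footruleCost w π σ := kendallCost_le_footruleCost hw hπ' σ
    _ ≤ (1 + 2 * α) * (2 * kendallCost w π σstar) := hfoot.trans <|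
        mul_le_mul_of_nonneg_left (footruleCost_le_two_mul_kendallCost hw hπ' σstar) (by linarith)
    _ = (2 + 4 * α) * kendallCost w π σstar := by ring

/-- Generalized Borda (sorting by nondecreasing average rank) is a
`(4α+2)`-approximation when all scores are within a factor `α` of each
other: `F(σ,p) ≤ (1+2α)·F(σ*,p)` and `K(σ,p) ≤ (2+4α)·K(σ*,p)`. -/
theorem borda_approx {n m : ℕ} (α : ℝ)
    (w : Fin m → ℝ) (hw : ∀ v, 0 ≤ w v) (hw1 : ∑ v, w v = 1)
    (π : Fin m → Fin n → ℕ∞) (hπ : ∀ v, ∃ k ≤ n, IsTopList n k (π v))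
    (hscore : ∀ i, 0 < score w π i)
    (hα : ∀ i j : Fin n, score w π i ≤ α * score w π j)
    (σ : Equiv.Perm (Fin n))
    (hσ : ∀ i j : Fin n, avgRank w π i < avgRank w π j → σ i < σ j)
    (σstar : Equiv.Perm (Fin n)) :
    footruleCost w π σ ≤ (1 + 2 * α) * footruleCost w π σstar ∧
      kendallCost w π σ ≤ (2 + 4 * α) * kendallCost w π σstar :=
  borda_approx_general α w hw π hπ hscore hα σ hσ σstar
end

section
/- There exists a family of instances on n=2 candidates showing Borda's rule applied to top-lists has unbounded approximation ratio: for every ε > 0 there is a distribution p over top-lists on {1,2} such that the permutation sorting by average rank has cost at least (1-ε)/ε times the optimal cost. Concretely, with p([1]) = 1-ε and p([2,1]) = ε: the ranking [1,2] has cost ε while sorting by average rank yields [2,1] with cost 1-ε. -/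
open Finset

/-! Borda's rule fails on the profile `p([1]) = 1 - ε`, `p([2,1]) = ε` because a top-list only
contributes to the average rank of the candidates it lists: candidate 2 appears only in `[2,1]`,
at rank 1, so its average rank is 1, while candidate 1 has average rank `1 + ε`. Sorting by
average rank therefore outputs `[2,1]`, which disagrees with the heavy list `[1]` and costs
`1 - ε`, whereas `[1,2]` only disagrees with `[2,1]` and costs `ε`. Candidates 1 and 2 are
`0` and `1` in `Fin 2`. -/

section AverageRank

variable {n m : ℕ} (w : Fin m → ℝ) (π : Fin m → Fin n → ℕ∞) (i : Fin n)

theorem avgRank_eq_of_forall_ne_top (h : ∀ v, π v i ≠ ⊤) :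
    avgRank w π i =
      (∑ v, w v * ((WithTop.untopD 0 (π v i) : ℕ) : ℝ)) / ∑ v, w v := by
  simp only [avgRank, score, if_pos (h _)]

theorem avgRank_eq_of_forall_eq_or_eq_top (r : ℕ) (hr : ∀ v, π v i = r ∨ π v i = ⊤)
    (hscore : score w π i ≠ 0) : avgRank w π i = r := by
  have hsum : (∑ v, if π v i ≠ ⊤ then w v * ((WithTop.untopD 0 (π v i) : ℕ) : ℝ) else 0) =
      score w π i * r := by
    rw [score, Finset.sum_mul]
    refine Finset.sum_congr rfl fun v _ => ?_
    rcases hr v with hv | hv <;> simp [hv]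
  rw [avgRank, hsum, mul_div_cancel_left₀ _ hscore]

end AverageRank

theorem isTopList_one_top : IsTopList 2 1 ![1, ⊤] := by
  refine ⟨fun i => ?_, fun r hr1 hr => ?_⟩
  · fin_cases i <;> simp
  · obtain rfl : r = 1 := by omega
    exact ⟨0, rfl, fun i hi => by fin_cases i <;> simp_all⟩

theorem isTopList_two_one : IsTopList 2 2 ![2, 1] := by
  refine ⟨fun i => ?_, fun r hr1 hr2 => ?_⟩
  · fin_cases i <;> simp
  · interval_cases r
    · exact ⟨1, rfl, fun i hi => by fin_cases i <;> simp_all⟩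
    · exact ⟨0, rfl, fun i hi => by fin_cases i <;> simp_all⟩

theorem kendallGen_one_fin_two (π : Fin 2 → ℕ∞) :
    kendallGen 1 π = if π 1 < π 0 then 1 else 0 := by
  rw [kendallGen, Finset.card_filter, Fintype.sum_prod_type]
  simp [Fin.sum_univ_two]

theorem kendallGen_swap_fin_two (π : Fin 2 → ℕ∞) :
    kendallGen (Equiv.swap 0 1) π = if π 0 < π 1 then 1 else 0 := by
  rw [kendallGen, Finset.card_filter, Fintype.sum_prod_type]
  simp only [Fin.sum_univ_two, Equiv.swap_apply_left, Equiv.swap_apply_right]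
  simp

def bordaBadWeights (ε : ℝ) : Fin 2 → ℝ := ![1 - ε, ε]

def bordaBadProfile : Fin 2 → Fin 2 → ℕ∞ := ![![1, ⊤], ![2, 1]]

section BadProfile

variable {ε : ℝ}

theorem bordaBadWeights_nonneg (h0 : 0 < ε) (h1 : ε < 1) (v : Fin 2) :
    0 ≤ bordaBadWeights ε v := by
  fin_cases v <;> simp [bordaBadWeights] <;> linarith

theorem sum_bordaBadWeights : ∑ v, bordaBadWeights ε v = 1 := by
  simp [bordaBadWeights, Fin.sum_univ_two]

theorem isTopList_bordaBadProfile (v : Fin 2) : ∃ k ≤ 2, IsTopList 2 k (bordaBadProfile v) := by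
  fin_cases v
  · exact ⟨1, by norm_num, isTopList_one_top⟩
  · exact ⟨2, le_rfl, isTopList_two_one⟩

theorem avgRank_bordaBadProfile_one (h0 : 0 < ε) :
    avgRank (bordaBadWeights ε) bordaBadProfile 1 = 1 := by
  have hscore : score (bordaBadWeights ε) bordaBadProfile 1 = ε := by
    simp [score, bordaBadWeights, bordaBadProfile, Fin.sum_univ_two]
  have hrank : ∀ v, bordaBadProfile v 1 = (1 : ℕ) ∨ bordaBadProfile v 1 = ⊤ := by
    intro v; fin_cases v <;> simp [bordaBadProfile]
  exact_mod_cast avgRank_eq_of_forall_eq_or_eq_top _ _ _ 1 hrank (hscore ▸ h0.ne')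

theorem avgRank_bordaBadProfile_zero :
    avgRank (bordaBadWeights ε) bordaBadProfile 0 = 1 + ε := by
  rw [avgRank_eq_of_forall_ne_top _ _ _ (fun v => by fin_cases v <;> simp [bordaBadProfile]),
    sum_bordaBadWeights]
  have hrank₁ : WithTop.untopD 0 (1 : ℕ∞) = 1 := rfl
  have hrank₂ : WithTop.untopD 0 (2 : ℕ∞) = 2 := rfl
  simp only [Fin.sum_univ_two, bordaBadWeights, bordaBadProfile, Matrix.cons_val_zero,
    Matrix.cons_val_one, hrank₁, hrank₂]
  push_cast
  ring

theorem cost_one_bordaBadProfile :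
    ∑ v, bordaBadWeights ε v * (kendallGen 1 (bordaBadProfile v) : ℝ) = ε := by
  simp [Fin.sum_univ_two, kendallGen_one_fin_two, bordaBadWeights, bordaBadProfile]

theorem cost_swap_bordaBadProfile :
    ∑ v, bordaBadWeights ε v * (kendallGen (Equiv.swap 0 1) (bordaBadProfile v) : ℝ) = 1 - ε := by
  simp [Fin.sum_univ_two, kendallGen_swap_fin_two, bordaBadWeights, bordaBadProfile]

end BadProfile

/-- Borda's rule on top-lists has unbounded approximation ratio: for every
`ε ∈ (0,1)` there is a profile on two candidates (namely
`p([1;…]) = 1-ε`, `p([2,1]) = ε`) for which the optimal ranking `[1,2]`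
costs `ε`, while sorting by average rank outputs `[2,1]`
(since `Rank(2) < Rank(1)`), which costs `1-ε ≥ ((1-ε)/ε)·ε`. -/
theorem borda_unbounded_ratio (ε : ℝ) (h0 : 0 < ε) (h1 : ε < 1) :
    ∃ (w : Fin 2 → ℝ) (π : Fin 2 → Fin 2 → ℕ∞),
      (∀ v, 0 ≤ w v) ∧ (∑ v, w v) = 1 ∧
      (∀ v, ∃ k ≤ 2, IsTopList 2 k (π v)) ∧
      w 0 = 1 - ε ∧ w 1 = ε ∧
      π 0 0 = (1 : ℕ∞) ∧ π 0 1 = ⊤ ∧ π 1 0 = (2 : ℕ∞) ∧ π 1 1 = (1 : ℕ∞) ∧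
      avgRank w π 1 < avgRank w π 0 ∧
      (∑ v, w v * (kendallGen (1 : Equiv.Perm (Fin 2)) (π v) : ℝ)) = ε ∧
      (∑ v, w v * (kendallGen (Equiv.swap (0 : Fin 2) 1) (π v) : ℝ)) = 1 - ε ∧
      (1 - ε) ≥ ((1 - ε) / ε) * ε := by
  refine ⟨bordaBadWeights ε, bordaBadProfile, bordaBadWeights_nonneg h0 h1,
    sum_bordaBadWeights, isTopList_bordaBadProfile, rfl, rfl, rfl, rfl, rfl, rfl, ?_,
    cost_one_bordaBadProfile, cost_swap_bordaBadProfile, (div_mul_cancel₀ _ h0.ne').le⟩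
  rw [avgRank_bordaBadProfile_one h0, avgRank_bordaBadProfile_zero]
  linarith
end

section
/- Let p be a distribution over top-lists on [n], η > 0, and u uniform on [0,1). Define the random bucket index f(s) = ⌊u - η·ln s⌋ for s ∈ (0,1] and f(0) = ∞. Say a permutation respects the partition if f(Score(i)) < f(Score(j)) implies σ(i) < σ(j). Then the expected (over u) cost of the best partition-respecting permutation is at most (1+η) times the optimal cost: E_u[min_{σ respecting} K(σ,p)] ≤ (1+η)·min_{σ*} K(σ*,p). -/
/-! The bucket boundaries `⌊u - η ln s⌋` move with a uniform shift `u`, so two candidates with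
scores `c < d` are separated with probability at most `η (ln d - ln c) ≤ η (d - c) / c`.
Sort candidates by bucket and, inside a bucket, as `σ*` does; this respects the partition and
differs from `σ*` only on pairs `i, j` that the partition separates against `σ*`. Such an
inversion costs at most `p(π i < π j) - p(π j < π i) ≤ Score i` extra, so its expected extra cost
is at most `η (Score j - Score i)⁺ ≤ η p(π j < π i)`, which is `η` times what `σ*` pays on it. -/

open Finset MeasureTheory

/-- The random bucket index `f(s) = ⌊u − η ln s⌋` for `s ∈ (0,1]`,
and `f(0) = ∞`. -/
noncomputable def bucket (η u s : ℝ) : ℕ∞ :=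
  if s = 0 then ⊤ else ((⌊u - η * Real.log s⌋.toNat : ℕ) : ℕ∞)

/-- `σ` respects the random partition induced by `u`: candidates in earlier
buckets are ranked before candidates in later buckets. -/
noncomputable def Respects {n m : ℕ} (w : Fin m → ℝ) (π : Fin m → Fin n → ℕ∞)
    (η u : ℝ) (σ : Equiv.Perm (Fin n)) : Prop :=
  ∀ i j : Fin n, bucket η u (score w π i) < bucket η u (score w π j) → σ i < σ j

lemma exists_perm_lt_iff_lt {n : ℕ} {α : Type*} [LinearOrder α] {f : Fin n → α}
    (hf : Function.Injective f) : ∃ σ : Equiv.Perm (Fin n), ∀ i j, σ i < σ j ↔ f i < f j := by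
  have hsort : StrictMono (f ∘ Tuple.sort f) :=
    (Tuple.monotone_sort f).strictMono_of_injective (hf.comp (Tuple.sort f).injective)
  refine ⟨(Tuple.sort f)⁻¹, fun i j => ?_⟩
  simpa [Equiv.Perm.inv_def] using (hsort.lt_iff_lt (a := (Tuple.sort f).symm i)
    (b := (Tuple.sort f).symm j)).symm

lemma sum_eq_sum_lt_add_swap {α β γ : Type*} [Fintype α] [AddCommMonoid β] [LinearOrder γ]
    {g : α → γ} (hg : Function.Injective g) (f : α × α → β) (hdiag : ∀ a, f (a, a) = 0) :
    ∑ q, f q = ∑ q ∈ univ.filter (fun q : α × α => g q.1 < g q.2), (f q + f q.swap) := by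
  have hsplit : ∀ q : α × α,
      f q = (if g q.1 < g q.2 then f q else 0) + (if g q.2 < g q.1 then f q else 0) := by
    rintro ⟨a, b⟩
    rcases lt_trichotomy (g a) (g b) with h | h | h
    · simp [h, h.not_gt]
    · simp [hg h, hdiag]
    · simp [h, h.not_gt]
  have hswap : ∑ q : α × α, (if g q.2 < g q.1 then f q else 0) =
      ∑ q : α × α, (if g q.1 < g q.2 then f q.swap else 0) :=
    Fintype.sum_equiv (Equiv.prodComm α α) _ _ fun q => rfl
  rw [Fintype.sum_congr _ _ hsplit, sum_add_distrib, hswap, ← sum_add_distrib, sum_filter]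
  exact Fintype.sum_congr _ _ fun q => by split_ifs <;> simp

lemma monotone_floor_sub (a : ℝ) : Monotone fun u : ℝ => (⌊u - a⌋ : ℝ) := fun _ _ h =>
  Int.cast_le.mpr (Int.floor_mono (sub_le_sub_right h a))

lemma intervalIntegral_floor_sub (a : ℝ) :
    ∫ u in (0 : ℝ)..1, (⌊u - a⌋ : ℝ) = 1 / 2 - a - ∫ x in (0 : ℝ)..1, Int.fract x := by
  have hfloor : IntervalIntegrable (fun x : ℝ => (⌊x⌋ : ℝ)) volume (-a) (-a + 1) := by
    simpa using (monotone_floor_sub 0).intervalIntegrable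
  have hperiodic := (Int.fract_periodic ℝ).intervalIntegral_add_eq (-a) 0
  rw [zero_add] at hperiodic
  rw [intervalIntegral.integral_comp_sub_right (fun x => (⌊x⌋ : ℝ)), zero_sub,
    show (1 : ℝ) - a = -a + 1 by ring, ← hperiodic]
  simp_rw [← Int.self_sub_floor]
  rw [intervalIntegral.integral_sub intervalIntegral.intervalIntegrable_id hfloor, integral_id]
  ring

lemma setIntegral_Ico_floor_sub_sub_floor_sub (a b : ℝ) :
    ∫ u in Set.Ico (0 : ℝ) 1, ((⌊u - a⌋ : ℝ) - ⌊u - b⌋) = b - a := by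
  rw [integral_Ico_eq_integral_Ioo, ← integral_Ioc_eq_integral_Ioo,
    ← intervalIntegral.integral_of_le zero_le_one, intervalIntegral.integral_sub
      (monotone_floor_sub a).intervalIntegrable (monotone_floor_sub b).intervalIntegrable,
    intervalIntegral_floor_sub, intervalIntegral_floor_sub]
  ring

lemma floor_lt_floor_of_bucket_lt {η u c d : ℝ} (hc : c ≠ 0) (hd : d ≠ 0)
    (h : bucket η u d < bucket η u c) : ⌊u - η * Real.log d⌋ < ⌊u - η * Real.log c⌋ := by
  simp only [bucket, hc, hd, if_false, Nat.cast_lt] at h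
  exact Int.lt_of_toNat_lt h

lemma measurable_bucket (η s : ℝ) : Measurable fun u => bucket η u s := by
  unfold bucket
  split_ifs
  · exact measurable_const
  · fun_prop

lemma integrableOn_ite_bucket_lt (η c d M : ℝ) :
    IntegrableOn (fun u => if bucket η u d < bucket η u c then M else 0) (Set.Ico 0 1) := by
  refine Measure.integrableOn_of_bounded (M := |M|) (by simp) ?_ (ae_of_all _ fun u => ?_)
  · exact ((Measurable.of_discrete (f := fun p : ℕ∞ × ℕ∞ => if p.1 < p.2 then M else 0)).comp
      ((measurable_bucket η d).prodMk (measurable_bucket η c))).aestronglyMeasurable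
  · split_ifs <;> simp

lemma integrableOn_floor_sub (a : ℝ) :
    IntegrableOn (fun u : ℝ => (⌊u - a⌋ : ℝ)) (Set.Ico 0 1) :=
  (((monotone_floor_sub a).monotoneOn _).integrableOn_isCompact isCompact_Icc).mono_set
    Set.Ico_subset_Icc_self

lemma ite_bucket_lt_le_mul_floor_sub {η c d M : ℝ} (hη : 0 ≤ η) (hc : 0 < c) (hcd : c ≤ d)
    (hM : 0 ≤ M) (u : ℝ) :
    (if bucket η u d < bucket η u c then M else 0) ≤
      M * ((⌊u - η * Real.log c⌋ : ℝ) - ⌊u - η * Real.log d⌋) := by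
  have hd : 0 < d := hc.trans_le hcd
  have hmono : ⌊u - η * Real.log d⌋ ≤ ⌊u - η * Real.log c⌋ :=
    Int.floor_mono (by nlinarith [Real.log_le_log hc hcd])
  split_ifs with h
  · have hlt := floor_lt_floor_of_bucket_lt hc.ne' hd.ne' h
    have hone : (1 : ℝ) ≤ (⌊u - η * Real.log c⌋ : ℝ) - ⌊u - η * Real.log d⌋ := by
      rw [le_sub_iff_add_le']
      exact_mod_cast hlt
    nlinarith
  · exact mul_nonneg hM (sub_nonneg.mpr (by exact_mod_cast hmono))

lemma setIntegral_ite_bucket_lt_le {η c d M : ℝ} (hη : 0 ≤ η) (hc : 0 ≤ c) (hd : 0 ≤ d)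
    (hM : 0 ≤ M) (hMc : M ≤ c) :
    ∫ u in Set.Ico (0 : ℝ) 1, (if bucket η u d < bucket η u c then M else 0) ≤
      η * max (d - c) 0 := by
  have hrhs : 0 ≤ η * max (d - c) 0 := mul_nonneg hη (le_max_right _ _)
  rcases hc.eq_or_lt with rfl | hc
  · simp only [le_antisymm hMc hM, ite_self, integral_zero]
    exact hrhs
  rcases hd.eq_or_lt with rfl | hd
  · simpa [bucket] using hrhs
  by_cases hdc : d ≤ c
  · have hzero : ∀ u, ¬ bucket η u d < bucket η u c := fun u h =>
      (floor_lt_floor_of_bucket_lt hc.ne' hd.ne' h).not_ge <| Int.floor_mono <| by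
        nlinarith [Real.log_le_log hd hdc]
    simp only [hzero, if_false, integral_zero]
    exact hrhs
  push Not at hdc
  have hlog_div : Real.log d - Real.log c ≤ d / c - 1 := by
    rw [← Real.log_div hd.ne' hc.ne']
    exact Real.log_le_sub_one_of_pos (by positivity)
  calc ∫ u in Set.Ico (0 : ℝ) 1, (if bucket η u d < bucket η u c then M else 0)
      ≤ ∫ u in Set.Ico (0 : ℝ) 1, M * ((⌊u - η * Real.log c⌋ : ℝ) - ⌊u - η * Real.log d⌋) :=
        integral_mono_of_nonneg (ae_of_all _ fun _ => ite_nonneg hM le_rfl)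
          (((integrableOn_floor_sub _).sub (integrableOn_floor_sub _)).const_mul M)
          (ae_of_all _ (ite_bucket_lt_le_mul_floor_sub hη hc hdc.le hM))
    _ = M * (η * (Real.log d - Real.log c)) := by
        rw [integral_const_mul, setIntegral_Ico_floor_sub_sub_floor_sub]; ring
    _ ≤ c * (η * (d / c - 1)) := by
        have hlog := sub_nonneg.mpr (Real.log_le_log hc hdc.le)
        gcongr
    _ = η * (d - c) := by field_simp
    _ ≤ η * max (d - c) 0 := by gcongr; exact le_max_left _ _

section Cost

variable {n m : ℕ} (w : Fin m → ℝ) (π : Fin m → Fin n → ℕ∞)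

/-- The paper's `p(π(i) < π(j))`. -/
def prefWeight (i j : Fin n) : ℝ :=
  ∑ v, if π v i < π v j then w v else 0

variable {w}

lemma prefWeight_nonneg (hw : ∀ v, 0 ≤ w v) (i j : Fin n) : 0 ≤ prefWeight w π i j :=
  sum_nonneg fun v _ => ite_nonneg (hw v) le_rfl

lemma kendallCost_nonneg (hw : ∀ v, 0 ≤ w v) (σ : Equiv.Perm (Fin n)) : 0 ≤ kendallCost w π σ :=
  sum_nonneg fun v _ => mul_nonneg (hw v) (Nat.cast_nonneg _)

lemma score_nonneg (hw : ∀ v, 0 ≤ w v) (i : Fin n) : 0 ≤ score w π i :=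
  sum_nonneg fun v _ => ite_nonneg (hw v) le_rfl

lemma prefWeight_le_score (hw : ∀ v, 0 ≤ w v) (i j : Fin n) :
    prefWeight w π i j ≤ score w π i :=
  sum_le_sum fun v _ => by
    by_cases h : π v i < π v j
    · simp [h, h.ne_top]
    · simp only [h, if_false]; exact ite_nonneg (hw v) le_rfl

lemma score_sub_score_le_prefWeight (hw : ∀ v, 0 ≤ w v) (i j : Fin n) :
    score w π j - score w π i ≤ prefWeight w π j i := by
  rw [score, score, ← sum_sub_distrib]
  refine sum_le_sum fun v _ => ?_
  by_cases hj : π v j = ⊤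
  · simp only [hj, ne_eq, not_true_eq_false, if_false, zero_sub, neg_le_iff_add_nonneg]
    exact add_nonneg (ite_nonneg (hw v) le_rfl) (ite_nonneg (hw v) le_rfl)
  by_cases hi : π v i = ⊤
  · simp [hi, hj, lt_top_iff_ne_top]
  · simp only [hi, hj, ne_eq, not_false_eq_true, if_true, sub_self]
    exact ite_nonneg (hw v) le_rfl

variable (w)

lemma kendallCost_eq_sum_prefWeight (σ : Equiv.Perm (Fin n)) :
    kendallCost w π σ =
      ∑ q : Fin n × Fin n, if σ q.2 < σ q.1 then prefWeight w π q.1 q.2 else 0 := by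
  simp only [kendallCost, kendallGen, card_filter, prefWeight, Nat.cast_sum, mul_sum]
  rw [sum_comm]
  refine sum_congr rfl fun q _ => ?_
  split_ifs with h <;> simp [h]

lemma kendallCost_eq_sum_lt (σstar σ : Equiv.Perm (Fin n)) :
    kendallCost w π σ = ∑ q ∈ univ.filter (fun q : Fin n × Fin n => σstar q.1 < σstar q.2),
      if σ q.2 < σ q.1 then prefWeight w π q.1 q.2 else prefWeight w π q.2 q.1 := by
  rw [kendallCost_eq_sum_prefWeight, sum_eq_sum_lt_add_swap σstar.injective _ (by simp)]
  refine sum_congr rfl fun q hq => ?_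
  have hσ : σ q.1 ≠ σ q.2 := σ.injective.ne ((mem_filter.mp hq).2.ne ∘ congrArg σstar)
  rcases hσ.lt_or_gt with h | h <;> simp [h, h.not_gt]

lemma kendallCost_self_eq_sum_lt (σstar : Equiv.Perm (Fin n)) :
    kendallCost w π σstar = ∑ q ∈ univ.filter (fun q : Fin n × Fin n => σstar q.1 < σstar q.2),
      prefWeight w π q.2 q.1 := by
  rw [kendallCost_eq_sum_lt w π σstar]
  exact sum_congr rfl fun q hq => if_neg (mem_filter.mp hq).2.not_gt

lemma kendallCost_le_add_of_inversions (σstar σ : Equiv.Perm (Fin n))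
    (B : Fin n → Fin n → Prop) [DecidableRel B]
    (hB : ∀ i j, σstar i < σstar j → σ j < σ i → B j i) :
    kendallCost w π σ ≤ kendallCost w π σstar +
      ∑ q ∈ univ.filter (fun q : Fin n × Fin n => σstar q.1 < σstar q.2),
        if B q.2 q.1 then max (prefWeight w π q.1 q.2 - prefWeight w π q.2 q.1) 0 else 0 := by
  rw [kendallCost_eq_sum_lt w π σstar σ, kendallCost_self_eq_sum_lt, ← sum_add_distrib]
  refine sum_le_sum fun q hq => ?_
  by_cases hσ : σ q.2 < σ q.1
  · simp only [hσ, hB q.1 q.2 (mem_filter.mp hq).2 hσ, if_true]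
    linarith [le_max_left (prefWeight w π q.1 q.2 - prefWeight w π q.2 q.1) 0]
  · simp only [hσ, if_false]
    split_ifs <;> simp

end Cost

section Partition

variable {n m : ℕ} (η : ℝ) (w : Fin m → ℝ) (π : Fin m → Fin n → ℕ∞)

/-- Bounds the extra cost, over `σ*`, of the bucket-sorted permutation on a pair `q` that `σ*`
ranks `q.1` before `q.2`. -/
noncomputable def inversionExcess (u : ℝ) (q : Fin n × Fin n) : ℝ :=
  if bucket η u (score w π q.2) < bucket η u (score w π q.1) then
    max (prefWeight w π q.1 q.2 - prefWeight w π q.2 q.1) 0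
  else 0

lemma exists_respects_kendallCost_le (u : ℝ) (σstar : Equiv.Perm (Fin n)) :
    ∃ σ, Respects w π η u σ ∧ kendallCost w π σ ≤ kendallCost w π σstar +
      ∑ q ∈ univ.filter (fun q : Fin n × Fin n => σstar q.1 < σstar q.2),
        inversionExcess η w π u q := by
  let key : Fin n → ℕ∞ ×ₗ Fin n := fun i => toLex (bucket η u (score w π i), σstar i)
  have hkey : Function.Injective key := fun i j h =>
    σstar.injective (congrArg (fun x => (ofLex x).2) h)
  obtain ⟨σ, hσ⟩ := exists_perm_lt_iff_lt hkey
  refine ⟨σ, fun i j h => (hσ i j).mpr (Prod.Lex.lt_iff.mpr (Or.inl h)), ?_⟩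
  refine kendallCost_le_add_of_inversions w π σstar σ
    (fun j i => bucket η u (score w π j) < bucket η u (score w π i)) fun i j hij hji => ?_
  rcases Prod.Lex.lt_iff.mp ((hσ j i).mp hji) with h | ⟨-, h⟩
  · exact h
  · exact absurd hij h.not_gt

lemma integrableOn_inversionExcess (q : Fin n × Fin n) :
    IntegrableOn (fun u => inversionExcess η w π u q) (Set.Ico 0 1) :=
  integrableOn_ite_bucket_lt _ _ _ _

variable {η w}

lemma setIntegral_inversionExcess_le (hη : 0 ≤ η) (hw : ∀ v, 0 ≤ w v) (q : Fin n × Fin n) :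
    ∫ u in Set.Ico (0 : ℝ) 1, inversionExcess η w π u q ≤ η * prefWeight w π q.2 q.1 := by
  have hexcess : max (prefWeight w π q.1 q.2 - prefWeight w π q.2 q.1) 0 ≤ score w π q.1 :=
    max_le (by linarith [prefWeight_le_score π hw q.1 q.2, prefWeight_nonneg π hw q.2 q.1])
      (score_nonneg π hw q.1)
  refine (setIntegral_ite_bucket_lt_le hη (score_nonneg π hw _) (score_nonneg π hw _)
    (le_max_right _ _) hexcess).trans ?_
  gcongr
  exact max_le (score_sub_score_le_prefWeight π hw _ _) (prefWeight_nonneg π hw _ _)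

end Partition

theorem partition_lemma_general {n m : ℕ} (η : ℝ) (hη : 0 < η)
    (w : Fin m → ℝ) (hw : ∀ v, 0 ≤ w v)
    (π : Fin m → Fin n → ℕ∞)
    (σstar : Equiv.Perm (Fin n)) :
    ∫ u in Set.Ico (0 : ℝ) 1,
        sInf {x : ℝ | ∃ σ : Equiv.Perm (Fin n),
          Respects w π η u σ ∧ x = kendallCost w π σ} ≤
      (1 + η) * kendallCost w π σstar := by
  set P := univ.filter (fun q : Fin n × Fin n => σstar q.1 < σstar q.2)
  have hpoint : ∀ u, sInf {x : ℝ | ∃ σ, Respects w π η u σ ∧ x = kendallCost w π σ} ≤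
      kendallCost w π σstar + ∑ q ∈ P, inversionExcess η w π u q := fun u => by
    obtain ⟨σ, hresp, hle⟩ := exists_respects_kendallCost_le η w π u σstar
    refine csInf_le_of_le ⟨0, ?_⟩ ⟨σ, hresp, rfl⟩ hle
    rintro _ ⟨σ, -, rfl⟩
    exact kendallCost_nonneg π hw σ
  have hint := integrable_finsetSum P fun q _ => integrableOn_inversionExcess η w π q
  calc ∫ u in Set.Ico (0 : ℝ) 1, sInf {x : ℝ | ∃ σ, Respects w π η u σ ∧ x = kendallCost w π σ}
      ≤ ∫ u in Set.Ico (0 : ℝ) 1, (kendallCost w π σstar + ∑ q ∈ P, inversionExcess η w π u q) :=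
        integral_mono_of_nonneg
          (ae_of_all _ fun _ => Real.sInf_nonneg <| by
            rintro _ ⟨σ, -, rfl⟩
            exact kendallCost_nonneg π hw σ)
          ((integrable_const _).add hint) (ae_of_all _ hpoint)
    _ = kendallCost w π σstar + ∑ q ∈ P, ∫ u in Set.Ico (0 : ℝ) 1, inversionExcess η w π u q := by
        rw [integral_add (integrable_const _) hint, integral_finsetSum P fun q _ =>
          integrableOn_inversionExcess η w π q]
        simp
    _ ≤ kendallCost w π σstar + ∑ q ∈ P, η * prefWeight w π q.2 q.1 := by
        gcongr with q
        exact setIntegral_inversionExcess_le π hη.le hw q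
    _ = (1 + η) * kendallCost w π σstar := by
        rw [← mul_sum, ← kendallCost_self_eq_sum_lt]
        ring

/-- Partition lemma: with `u` uniform on `[0,1)`, the expected cost of the best
partition-respecting permutation is at most `(1+η)` times the optimal cost. -/
theorem partition_lemma {n m : ℕ} (η : ℝ) (hη : 0 < η)
    (w : Fin m → ℝ) (hw : ∀ v, 0 ≤ w v) (hw1 : ∑ v, w v = 1)
    (π : Fin m → Fin n → ℕ∞) (hπ : ∀ v, ∃ k ≤ n, IsTopList n k (π v))
    (σstar : Equiv.Perm (Fin n)) :
    ∫ u in Set.Ico (0 : ℝ) 1,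
        sInf {x : ℝ | ∃ σ : Equiv.Perm (Fin n),
          Respects w π η u σ ∧ x = kendallCost w π σ} ≤
      (1 + η) * kendallCost w π σstar :=
  partition_lemma_general η hη w hw π σstar
end

section
/- Let p be a distribution over top-lists on [n], and decompose K(σ,p) = K_top(σ,p) + K_score(σ,p), where K_score counts only pairs with π(i) < π(j) = ∞. Then any permutation σ sorting candidates by nonincreasing Score minimizes K_score(·,p) over all permutations. In particular, if σ(i) = σ(j)+1 and Score(i) > Score(j), then swapping i and j strictly decreases K_score. -/
open Finset

/-- `K_score(σ,p)`: the part of the cost coming from pairs with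
`π(i) < π(j) = ∞`. -/
def kScore {n m : ℕ} (w : Fin m → ℝ) (π : Fin m → Fin n → ℕ∞)
    (σ : Equiv.Perm (Fin n)) : ℝ :=
  ∑ q ∈ (Finset.univ : Finset (Fin n × Fin n)).filter
      (fun q => σ q.2 < σ q.1),
    ∑ v, (if π v q.1 ≠ ⊤ ∧ π v q.2 = ⊤ then w v else 0)

/-! Each unordered pair `{a, b}` contributes to `kScore` either `c a b` or `c b a`, according to
its orientation under `σ`, where `c a b = p(π(a) < π(b) = ∞)`, and
`c a b - c b a = Score a - Score b`. Sorting by score therefore picks the cheaper orientation of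
every pair at once, while an adjacent transposition flips the orientation of `{i, j}` only,
changing `kScore` by exactly `Score i - Score j`. -/

section InversionCost

variable {ι κ : Type*} [LinearOrder κ]

def inversionCost [Fintype ι] (c : ι → ι → ℝ) (σ : ι → κ) : ℝ :=
  ∑ a, ∑ b, if σ b < σ a then c a b else 0

theorem two_mul_inversionCost [Fintype ι] (c : ι → ι → ℝ) (σ : ι → κ) :
    2 * inversionCost c σ =
      ∑ a, ∑ b, ((if σ b < σ a then c a b else 0) + (if σ a < σ b then c b a else 0)) := by
  simp only [inversionCost, two_mul, sum_add_distrib]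
  rw [sum_comm (f := fun a b => if σ a < σ b then c b a else 0)]

theorem inversionCost_le_of_forall_lt_imp_le [Fintype ι] {c : ι → ι → ℝ} {σ σ' : ι → κ}
    (hσ : Function.Injective σ) (hσ' : Function.Injective σ')
    (hc : ∀ a b, σ b < σ a → c a b ≤ c b a) :
    inversionCost c σ ≤ inversionCost c σ' := by
  have pair_le (a b : ι) :
      (if σ b < σ a then c a b else 0) + (if σ a < σ b then c b a else 0) ≤
        (if σ' b < σ' a then c a b else 0) + (if σ' a < σ' b then c b a else 0) := by
    rcases eq_or_ne a b with rfl | hab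
    · simp
    rcases (hσ.ne hab).lt_or_gt with h | h <;> rcases (hσ'.ne hab).lt_or_gt with h' | h' <;>
      simp [h, h', h.not_gt, h'.not_gt, hc _ _ h]
  have := sum_le_sum fun a (_ : a ∈ univ) => sum_le_sum fun b (_ : b ∈ univ) => pair_le a b
  rw [← two_mul_inversionCost, ← two_mul_inversionCost] at this
  linarith

theorem lt_swap_apply_iff_of_covBy [DecidableEq ι] {σ : ι → κ} (hσ : Function.Injective σ)
    {i j : ι} (hji : σ j ⋖ σ i) {a b : ι} (hab : ¬(a = i ∧ b = j)) (hba : ¬(a = j ∧ b = i)) :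
    σ (Equiv.swap i j b) < σ (Equiv.swap i j a) ↔ σ b < σ a := by
  have key {x : ι} (hi : x ≠ i) (hj : x ≠ j) :
      (σ x < σ j ↔ σ x < σ i) ∧ (σ j < σ x ↔ σ i < σ x) :=
    ⟨(hσ.ne hj).le_iff_lt.symm.trans hji.lt_iff_le_left.symm,
      hji.lt_iff_le_right.trans (hσ.ne hi).symm.le_iff_lt⟩
  by_cases ha : a = i ∨ a = j <;> by_cases hb : b = i ∨ b = j
  · rcases ha with rfl | rfl <;> rcases hb with rfl | rfl <;> simp_all
  · push Not at hb
    rcases ha with rfl | rfl <;> simp [Equiv.swap_apply_of_ne_of_ne hb.1 hb.2, key hb.1 hb.2]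
  · push Not at ha
    rcases hb with rfl | rfl <;> simp [Equiv.swap_apply_of_ne_of_ne ha.1 ha.2, key ha.1 ha.2]
  · push Not at ha hb
    simp [Equiv.swap_apply_of_ne_of_ne ha.1 ha.2, Equiv.swap_apply_of_ne_of_ne hb.1 hb.2]

theorem inversionCost_sub_inversionCost_comp_swap [Fintype ι] [DecidableEq ι] (c : ι → ι → ℝ)
    {σ : ι → κ} (hσ : Function.Injective σ) {i j : ι} (hji : σ j ⋖ σ i) :
    inversionCost c σ - inversionCost c (σ ∘ Equiv.swap i j) = c i j - c j i := by
  have hij : i ≠ j := fun h => hji.ne (by rw [h])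
  simp only [inversionCost, Function.comp_apply, ← sum_sub_distrib]
  rw [← Fintype.sum_prod_type' (f := fun a b => _ - _), Fintype.sum_eq_add (i, j) (j, i)]
  · simp [hji.lt, hji.lt.not_gt, sub_eq_add_neg]
  · simp [hij]
  · rintro ⟨a, b⟩ ⟨h1, h2⟩
    simp only [lt_swap_apply_iff_of_covBy hσ hji (by simpa using h1) (by simpa using h2), sub_self]

end InversionCost

/-- `p(π(a) < π(b) = ∞)` -/
def pairCost {n m : ℕ} (w : Fin m → ℝ) (π : Fin m → Fin n → ℕ∞) (a b : Fin n) : ℝ :=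
  ∑ v, if π v a ≠ ⊤ ∧ π v b = ⊤ then w v else 0

theorem pairCost_sub_pairCost {n m : ℕ} (w : Fin m → ℝ) (π : Fin m → Fin n → ℕ∞) (a b : Fin n) :
    pairCost w π a b - pairCost w π b a = score w π a - score w π b := by
  simp only [pairCost, score, ← sum_sub_distrib]
  refine sum_congr rfl fun v _ => ?_
  by_cases ha : π v a = ⊤ <;> by_cases hb : π v b = ⊤ <;> simp [ha, hb]

theorem kScore_eq_inversionCost {n m : ℕ} (w : Fin m → ℝ) (π : Fin m → Fin n → ℕ∞)
    (σ : Equiv.Perm (Fin n)) : kScore w π σ = inversionCost (pairCost w π) σ := by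
  rw [kScore, sum_filter, Fintype.sum_prod_type]
  rfl

theorem score_sort_minimizes_kScore_general {n m : ℕ}
    (w : Fin m → ℝ) (π : Fin m → Fin n → ℕ∞) :
    (∀ σ : Equiv.Perm (Fin n),
      (∀ i j : Fin n, score w π j < score w π i → σ i < σ j) →
      ∀ σ' : Equiv.Perm (Fin n), kScore w π σ ≤ kScore w π σ') ∧
    (∀ σ : Equiv.Perm (Fin n), ∀ i j : Fin n,
      (σ i : ℕ) = (σ j : ℕ) + 1 → score w π j < score w π i →
      kScore w π ((Equiv.swap i j).trans σ) < kScore w π σ) := by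
  refine ⟨fun σ hσ σ' => ?_, fun σ i j hij hs => ?_⟩
  · rw [kScore_eq_inversionCost, kScore_eq_inversionCost]
    refine inversionCost_le_of_forall_lt_imp_le σ.injective σ'.injective fun a b hba => ?_
    have : score w π a ≤ score w π b := not_lt.1 fun h => (hσ a b h).not_gt hba
    linarith [pairCost_sub_pairCost w π a b]
  · have hcov : σ j ⋖ σ i := Fin.covBy_iff.2 (Nat.covBy_iff_add_one_eq.2 hij.symm)
    have := inversionCost_sub_inversionCost_comp_swap (pairCost w π) σ.injective hcov
    rw [kScore_eq_inversionCost, kScore_eq_inversionCost, Equiv.coe_trans]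
    linarith [pairCost_sub_pairCost w π i j]

/-- Sorting candidates by nonincreasing score minimizes `K_score`; moreover
swapping two adjacent candidates whose scores are out of order strictly
decreases `K_score`. -/
theorem score_sort_minimizes_kScore {n m : ℕ}
    (w : Fin m → ℝ) (hw : ∀ v, 0 ≤ w v) (hw1 : ∑ v, w v = 1)
    (π : Fin m → Fin n → ℕ∞) (hπ : ∀ v, ∃ k ≤ n, IsTopList n k (π v)) :
    (∀ σ : Equiv.Perm (Fin n),
      (∀ i j : Fin n, score w π j < score w π i → σ i < σ j) →
      ∀ σ' : Equiv.Perm (Fin n), kScore w π σ ≤ kScore w π σ') ∧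
    (∀ σ : Equiv.Perm (Fin n), ∀ i j : Fin n,
      (σ i : ℕ) = (σ j : ℕ) + 1 → score w π j < score w π i →
      kScore w π ((Equiv.swap i j).trans σ) < kScore w π σ) :=
  score_sort_minimizes_kScore_general w π
end
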